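/- arXiv:1709.00987 — 7 statements merged into one kernel-verified Lean document; each statement's English description precedes it below -/
import Mathlib

section
/- Let p_1, …, p_l be pairwise distinct prime numbers and let r be a positive integer. Then the family of l·r functions of the variable s = (s_1,…,s_r) ∈ ℂ^r given by s ↦ p_i^{-s_j} (for 1 ≤ i ≤ l and 1 ≤ j ≤ r) is algebraically independent over ℂ; that is, for every nonzero polynomial P in l·r variables with complex coefficients there exists s ∈ ℂ^r such that P((p_i^{-s_j})_{1≤i≤l, 1≤j≤r}) ≠ 0. -/
open Complex Finset

/-- Auxiliary: the character `s ↦ exp (∑ j, -(s j) * a j)` on `(ℂ^r, +)`. -/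
noncomputable def expChar {r : ℕ} (a : Fin r → ℝ) : Multiplicative (Fin r → ℂ) →* ℂ where
  toFun s := Complex.exp (∑ j, -(Multiplicative.toAdd s j) * (a j : ℂ))
  map_one' := by simp
  map_mul' x y := by
    have h : (∑ j, -(Multiplicative.toAdd (x * y) j) * (a j : ℂ))
        = (∑ j, -(Multiplicative.toAdd x j) * (a j : ℂ))
          + ∑ j, -(Multiplicative.toAdd y j) * (a j : ℂ) := by
      rw [← Finset.sum_add_distrib]
      refine Finset.sum_congr rfl fun j _ => ?_
      have hxy : Multiplicative.toAdd (x * y) j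
          = Multiplicative.toAdd x j + Multiplicative.toAdd y j := rfl
      rw [hxy]; ring
    simp only [h, Complex.exp_add]

theorem fact_eval_aux {l : ℕ} (p : Fin l → ℕ) (hp : ∀ i, Nat.Prime (p i))
    (hinj : Function.Injective p) (e : Fin l → ℕ) (i0 : Fin l) :
    (∏ i, p i ^ e i).factorization (p i0) = e i0 := by
  rw [Nat.factorization_prod (fun i _ => pow_ne_zero _ (hp i).pos.ne')]
  rw [Finsupp.finset_sum_apply]
  have h1 : ∀ i : Fin l, ((p i ^ e i).factorization) (p i0)
      = e i * ((p i).factorization (p i0)) := by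
    intro i; rw [Nat.factorization_pow]; rfl
  simp only [h1]
  have h2 : ∀ i : Fin l, (p i).factorization (p i0) = if i = i0 then 1 else 0 := by
    intro i
    rw [(hp i).factorization]
    rcases eq_or_ne i i0 with h | h
    · simp [h]
    · rw [Finsupp.single_apply, if_neg (fun hh => h (hinj hh)), if_neg h]
  simp only [h2]
  simp

theorem log_prod_pow_aux {l : ℕ} (p : Fin l → ℕ) (hp : ∀ i, Nat.Prime (p i)) (e : Fin l → ℕ) :
    Real.log ((∏ i, p i ^ e i : ℕ) : ℝ) = ∑ i, (e i : ℝ) * Real.log (p i) := by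
  push_cast
  rw [Real.log_prod (fun i _ => pow_ne_zero _ (by exact_mod_cast (hp i).pos.ne'))]
  exact Finset.sum_congr rfl fun i _ => Real.log_pow _ _

/-- Let `p 0, …, p (l-1)` be pairwise distinct prime numbers and `r` a positive
integer. Then the `l·r` functions `s ↦ (p i)^(-s j) = exp (-(s j) · log (p i))` of the variable
`s ∈ ℂ^r` are algebraically independent over `ℂ`: for every nonzero polynomial `P` in `l·r`
variables with complex coefficients there exists `s ∈ ℂ^r` at which the evaluation is nonzero. -/
theorem stmt_0 (l r : ℕ) (hr : 0 < r) (p : Fin l → ℕ)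
    (hp : ∀ i, Nat.Prime (p i)) (hinj : Function.Injective p)
    (P : MvPolynomial (Fin l × Fin r) ℂ) (hP : P ≠ 0) :
    ∃ s : Fin r → ℂ,
      MvPolynomial.eval
        (fun ij : Fin l × Fin r =>
          Complex.exp (-(s ij.2) * (Real.log (p ij.1) : ℂ))) P ≠ 0 := by
  by_contra hcon
  push_neg at hcon
  -- the natural number attached to a monomial `d` in coordinate `j`
  set n : Fin r → (Fin l × Fin r →₀ ℕ) → ℕ := fun j d => ∏ i, p i ^ d (i, j) with hn
  have hnpos : ∀ j d, 0 < n j d := fun j d =>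
    Finset.prod_pos fun i _ => pow_pos (hp i).pos _
  -- the character family
  set χ : (Fin l × Fin r →₀ ℕ) → (Multiplicative (Fin r → ℂ) →* ℂ) :=
    fun d => expChar (fun j => Real.log (n j d)) with hχ
  -- value of `expChar a` at the `-1` indicator of coordinate `j`
  have hval : ∀ (a : Fin r → ℝ) (j : Fin r),
      expChar a (Multiplicative.ofAdd (fun j' => if j' = j then (-1 : ℂ) else 0))
        = Complex.exp (a j) := by
    intro a j
    show Complex.exp _ = _
    congr 1
    rw [show (∑ j', -(Multiplicative.toAdd
        (Multiplicative.ofAdd (fun j' => if j' = j then (-1 : ℂ) else 0)) j') * (a j' : ℂ))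
        = ∑ j', if j' = j then (a j' : ℂ) else 0 from
      Finset.sum_congr rfl fun j' _ => by
        simp only [toAdd_ofAdd]
        split <;> simp]
    simp
  -- injectivity of the character family
  have hχinj : Function.Injective χ := by
    intro d d' hdd'
    have hnj : ∀ j, n j d = n j d' := by
      intro j
      have := congrArg (fun f : Multiplicative (Fin r → ℂ) →* ℂ =>
        f (Multiplicative.ofAdd (fun j' => if j' = j then (-1 : ℂ) else 0))) hdd'
      simp only [hχ, hval] at this
      have h2 : Real.exp (Real.log (n j d)) = Real.exp (Real.log (n j d')) := by
        have := this
        rw [← Complex.ofReal_exp, ← Complex.ofReal_exp] at *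
        · exact_mod_cast this
      rw [Real.exp_log (by exact_mod_cast hnpos j d),
        Real.exp_log (by exact_mod_cast hnpos j d')] at h2
      exact_mod_cast h2
    ext ij
    obtain ⟨i, j⟩ := ij
    have := congrArg (fun m => m.factorization (p i)) (hnj j)
    simpa only [hn, fact_eval_aux p hp hinj] using this
  -- the key monomial computation
  have hkey : ∀ (s : Fin r → ℂ) (d : Fin l × Fin r →₀ ℕ),
      (∏ ij : Fin l × Fin r,
          Complex.exp (-(s ij.2) * (Real.log (p ij.1) : ℂ)) ^ d ij)
        = Complex.exp (∑ j, -(s j) * (Real.log (n j d) : ℂ)) := by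
    intro s d
    have hlog : ∀ j, (Real.log (n j d) : ℂ) = ∑ i, (d (i, j) : ℂ) * Real.log (p i) := by
      intro j
      have h : Real.log (n j d) = ∑ i, (d (i, j) : ℝ) * Real.log (p i) :=
        log_prod_pow_aux p hp (fun i => d (i, j))
      rw [h]
      push_cast
      rfl
    simp only [hlog]
    rw [show (∑ j, -(s j) * ∑ i, (d (i, j) : ℂ) * Real.log (p i))
        = ∑ ij : Fin l × Fin r, (d ij : ℂ) * (-(s ij.2) * (Real.log (p ij.1) : ℂ)) from by
      rw [Fintype.sum_prod_type, Finset.sum_comm]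
      refine Finset.sum_congr rfl fun j _ => ?_
      rw [Finset.mul_sum]
      exact Finset.sum_congr rfl fun i _ => by ring]
    rw [Complex.exp_sum]
    exact Finset.prod_congr rfl fun ij _ => (Complex.exp_nat_mul _ _).symm
  -- linear independence of characters
  have hli : LinearIndependent ℂ (fun d : Fin l × Fin r →₀ ℕ => ⇑(χ d)) :=
    (linearIndependent_monoidHom (Multiplicative (Fin r → ℂ)) ℂ).comp χ hχinj
  rw [linearIndependent_iff'] at hli
  have hz : (∑ d ∈ P.support, MvPolynomial.coeff d P • ⇑(χ d)) = 0 := by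
    funext g
    show (∑ d ∈ P.support, MvPolynomial.coeff d P • ⇑(χ d)) g = 0
    rw [Finset.sum_apply]
    have heval := hcon (Multiplicative.toAdd g)
    rw [MvPolynomial.eval_eq'] at heval
    rw [← heval]
    refine Finset.sum_congr rfl fun d _ => ?_
    rw [Pi.smul_apply, smul_eq_mul, hkey (Multiplicative.toAdd g) d]
    rfl
  obtain ⟨d, hd⟩ := MvPolynomial.support_nonempty.mpr hP
  exact MvPolynomial.mem_support_iff.mp hd (hli P.support _ hz d hd)
end

section
/- Let 𝓕 be a finite set of prime numbers, let r be a positive integer, and for each p ∈ 𝓕 let A_p and B_p be nonzero polynomials in r variables with complex coefficients. Suppose that for every s = (s_1,…,s_r) ∈ ℂ^r one has ∏_{p∈𝓕} A_p(p^{-s_1},…,p^{-s_r}) = ∏_{p∈𝓕} B_p(p^{-s_1},…,p^{-s_r}). Then for every p ∈ 𝓕 there exists a nonzero constant c_p ∈ ℂ such that A_p = c_p·B_p as polynomials; in particular each ratio R_p(s) = A_p(p^{-s_1},…,p^{-s_r})/B_p(p^{-s_1},…,p^{-s_r}) is, where defined, a nonzero constant function of s. -/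
open MvPolynomial

private lemma prime_log_sum_inj (𝓕 : Finset ℕ) (hprime : ∀ p ∈ 𝓕, Nat.Prime p)
    (n m : ℕ → ℕ)
    (h : ∑ q ∈ 𝓕, (n q : ℝ) * Real.log q = ∑ q ∈ 𝓕, (m q : ℝ) * Real.log q) :
    ∀ p ∈ 𝓕, n p = m p := by
  have hlog : ∀ k : ℕ → ℕ,
      Real.log ((∏ q ∈ 𝓕, q ^ k q : ℕ) : ℝ) = ∑ q ∈ 𝓕, (k q : ℝ) * Real.log q := by
    intro k
    push_cast
    rw [Real.log_prod (fun q hq => pow_ne_zero _ (by exact_mod_cast (hprime q hq).pos.ne'))]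
    exact Finset.sum_congr rfl fun q hq => by rw [Real.log_pow]
  have hpos : ∀ k : ℕ → ℕ, (0:ℝ) < ((∏ q ∈ 𝓕, q ^ k q : ℕ) : ℝ) := by
    intro k
    have : 0 < (∏ q ∈ 𝓕, q ^ k q : ℕ) :=
      Finset.prod_pos fun q hq => pow_pos (hprime q hq).pos _
    exact_mod_cast this
  have hNM : (∏ q ∈ 𝓕, q ^ n q : ℕ) = (∏ q ∈ 𝓕, q ^ m q : ℕ) := by
    have : ((∏ q ∈ 𝓕, q ^ n q : ℕ) : ℝ) = ((∏ q ∈ 𝓕, q ^ m q : ℕ) : ℝ) := by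
      rw [← Real.exp_log (hpos n), ← Real.exp_log (hpos m), hlog n, hlog m, h]
    exact_mod_cast this
  have hfact : ∀ k : ℕ → ℕ, ∀ p ∈ 𝓕, (∏ q ∈ 𝓕, q ^ k q : ℕ).factorization p = k p := by
    intro k p hp
    rw [Nat.factorization_prod (fun q hq => pow_ne_zero _ (hprime q hq).pos.ne'),
      Finsupp.finset_sum_apply]
    rw [Finset.sum_eq_single p
      (fun q hq hqp => by
        rw [Nat.Prime.factorization_pow (hprime q hq), Finsupp.single_eq_of_ne' hqp])
      (fun h => absurd hp h)]
    rw [Nat.Prime.factorization_pow (hprime p hp), Finsupp.single_eq_same]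
  intro p hp
  rw [← hfact n p hp, ← hfact m p hp, hNM]

private noncomputable def chiHom {r : ℕ} (ν : Fin r → ℂ) : Multiplicative (Fin r → ℂ) →* ℂ where
  toFun s := Complex.exp (∑ j, Multiplicative.toAdd s j * ν j)
  map_one' := by simp
  map_mul' s t := by
    simp only [toAdd_mul, Pi.add_apply, add_mul, Finset.sum_add_distrib, Complex.exp_add]

private lemma chiHom_apply {r : ℕ} (ν : Fin r → ℂ) (s : Fin r → ℂ) :
    chiHom ν (Multiplicative.ofAdd s) = Complex.exp (∑ j, s j * ν j) := rfl

private lemma chiHom_inj {r : ℕ} : Function.Injective (chiHom (r := r)) := by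
  intro ν ν' h
  funext j
  by_contra hne
  have hδ0 : ν j - ν' j ≠ 0 := sub_ne_zero.mpr hne
  set t : ℂ := (Real.pi * Complex.I) / (ν j - ν' j) with ht
  have h1 : chiHom ν (Multiplicative.ofAdd (Pi.single j t)) =
      chiHom ν' (Multiplicative.ofAdd (Pi.single j t)) := by rw [h]
  rw [chiHom_apply, chiHom_apply] at h1
  have hsum : ∀ μ : Fin r → ℂ, ∑ j', (Pi.single j t : Fin r → ℂ) j' * μ j' = t * μ j := by
    intro μ
    rw [Finset.sum_eq_single j (fun j' _ hj' => by rw [Pi.single_eq_of_ne hj', zero_mul])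
      (fun h => absurd (Finset.mem_univ j) h), Pi.single_eq_same]
  rw [hsum ν, hsum ν'] at h1
  have h2 : Complex.exp (t * ν j - t * ν' j) = 1 := by
    rw [Complex.exp_sub, h1, div_self (Complex.exp_ne_zero _)]
  rw [← mul_sub, ht, div_mul_cancel₀ _ hδ0, Complex.exp_pi_mul_I] at h2
  norm_num at h2

private lemma aeval_C_comp {σ τ : Type*} (y : σ → ℂ) (P : MvPolynomial σ ℂ) :
    MvPolynomial.aeval (fun j => (MvPolynomial.C (y j) : MvPolynomial τ ℂ)) P
      = MvPolynomial.C (MvPolynomial.eval y P) := by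
  induction P using MvPolynomial.induction_on with
  | C a => simp
  | add p q hp hq => simp only [map_add, hp, hq]
  | mul_X p i h =>
      simp only [map_mul, h, MvPolynomial.aeval_X, MvPolynomial.eval_mul,
        MvPolynomial.eval_X, map_mul]


/-- Let `𝓕` be a finite set of primes, `r` a positive integer, and for each
`p ∈ 𝓕` let `A p` and `B p` be nonzero polynomials in `r` variables over `ℂ`. If
`∏_{p ∈ 𝓕} A p (p^{-s_1},…,p^{-s_r}) = ∏_{p ∈ 𝓕} B p (p^{-s_1},…,p^{-s_r})` for every
`s ∈ ℂ^r`, then for each `p ∈ 𝓕` there is a nonzero constant `c ∈ ℂ` with `A p = c · B p`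
as polynomials. -/
theorem stmt_2 (𝓕 : Finset ℕ) (hprime : ∀ p ∈ 𝓕, Nat.Prime p)
    (r : ℕ) (hr : 0 < r)
    (A B : ℕ → MvPolynomial (Fin r) ℂ)
    (hA : ∀ p ∈ 𝓕, A p ≠ 0) (hB : ∀ p ∈ 𝓕, B p ≠ 0)
    (heq : ∀ s : Fin r → ℂ,
      (∏ p ∈ 𝓕, MvPolynomial.eval
          (fun j => Complex.exp (-(s j) * (Real.log p : ℂ))) (A p)) =
      ∏ p ∈ 𝓕, MvPolynomial.eval
          (fun j => Complex.exp (-(s j) * (Real.log p : ℂ))) (B p)) :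
    ∀ p ∈ 𝓕, ∃ c : ℂ, c ≠ 0 ∧ A p = MvPolynomial.C c * B p := by
  classical
  set At : ℕ → MvPolynomial (ℕ × Fin r) ℂ :=
    fun q => MvPolynomial.rename (Prod.mk q) (A q) with hAtdef
  set Bt : ℕ → MvPolynomial (ℕ × Fin r) ℂ :=
    fun q => MvPolynomial.rename (Prod.mk q) (B q) with hBtdef
  -- Step 1: the renamed polynomial identity
  have key : (∏ q ∈ 𝓕, At q) = ∏ q ∈ 𝓕, Bt q := by
    set P : MvPolynomial (ℕ × Fin r) ℂ := (∏ q ∈ 𝓕, At q) - ∏ q ∈ 𝓕, Bt q with hPdef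
    have hvars : ∀ d ∈ P.support, ∀ i ∈ (d : (ℕ × Fin r) →₀ ℕ).support, i.1 ∈ 𝓕 := by
      intro d hd i hi
      have hiv : i ∈ P.vars := (MvPolynomial.mem_vars i).2 ⟨d, hd, hi⟩
      have h2 := MvPolynomial.vars_sub_subset (p := ∏ q ∈ 𝓕, At q) (q := ∏ q ∈ 𝓕, Bt q) hiv
      rcases Finset.mem_union.1 h2 with h3 | h3
      · obtain ⟨q, hq, hiq⟩ := Finset.mem_biUnion.1 (MvPolynomial.vars_prod At h3)
        obtain ⟨j, hj, hji⟩ := MvPolynomial.mem_vars_rename _ _ hiq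
        rw [← hji]; exact hq
      · obtain ⟨q, hq, hiq⟩ := Finset.mem_biUnion.1 (MvPolynomial.vars_prod Bt h3)
        obtain ⟨j, hj, hji⟩ := MvPolynomial.mem_vars_rename _ _ hiq
        rw [← hji]; exact hq
    set w : ((ℕ × Fin r) →₀ ℕ) → Fin r → ℝ :=
      fun d j => ∑ q ∈ 𝓕, (d (q, j) : ℝ) * Real.log q with hwdef
    set ν : ((ℕ × Fin r) →₀ ℕ) → Fin r → ℂ := fun d j => -((w d j : ℝ) : ℂ) with hνdef
    -- per-monomial evaluation formula
    have hterm : ∀ d ∈ P.support, ∀ s : Fin r → ℂ,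
        (∏ i ∈ (d : (ℕ × Fin r) →₀ ℕ).support,
            Complex.exp (-(s i.2) * (Real.log i.1 : ℂ)) ^ d i)
          = chiHom (ν d) (Multiplicative.ofAdd s) := by
      intro d hd s
      have hsub : (d : (ℕ × Fin r) →₀ ℕ).support ⊆ 𝓕 ×ˢ Finset.univ := fun i hi =>
        Finset.mem_product.2 ⟨hvars d hd i hi, Finset.mem_univ _⟩
      have hext : (∏ i ∈ (d : (ℕ × Fin r) →₀ ℕ).support,
            Complex.exp (-(s i.2) * (Real.log i.1 : ℂ)) ^ d i)
          = ∏ i ∈ 𝓕 ×ˢ Finset.univ, Complex.exp (-(s i.2) * (Real.log i.1 : ℂ)) ^ d i :=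
        Finset.prod_subset hsub (fun i _ hni => by
          rw [Finsupp.notMem_support_iff.1 hni, pow_zero])
      rw [hext]
      have hstep : ∀ i : ℕ × Fin r,
          Complex.exp (-(s i.2) * (Real.log i.1 : ℂ)) ^ d i
            = Complex.exp ((d i : ℂ) * (-(s i.2) * (Real.log i.1 : ℂ))) := fun i =>
        (Complex.exp_nat_mul _ _).symm
      rw [Finset.prod_congr rfl fun i _ => hstep i, ← Complex.exp_sum, chiHom_apply]
      congr 1
      rw [Finset.sum_product, Finset.sum_comm]
      refine Finset.sum_congr rfl fun j _ => ?_
      have hcast : ((w d j : ℝ) : ℂ) = ∑ q ∈ 𝓕, (d (q, j) : ℂ) * (Real.log q : ℂ) := by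
        rw [hwdef]; push_cast; ring_nf
      rw [hνdef]
      simp only
      rw [hcast, mul_neg, Finset.mul_sum, ← Finset.sum_neg_distrib]
      exact Finset.sum_congr rfl fun q _ => by ring
    -- the exponential sums vanish
    have hzero : ∀ s : Fin r → ℂ,
        ∑ d ∈ P.support, MvPolynomial.coeff d P * chiHom (ν d) (Multiplicative.ofAdd s) = 0 := by
      intro s
      have h1 : MvPolynomial.eval
          (fun i : ℕ × Fin r => Complex.exp (-(s i.2) * (Real.log i.1 : ℂ))) P = 0 := by
        rw [hPdef, map_sub, map_prod, map_prod]
        have eA : ∀ q ∈ 𝓕, MvPolynomial.eval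
            (fun i : ℕ × Fin r => Complex.exp (-(s i.2) * (Real.log i.1 : ℂ))) (At q)
            = MvPolynomial.eval (fun j => Complex.exp (-(s j) * (Real.log q : ℂ))) (A q) :=
          fun q _ => by rw [hAtdef]; simp only; rw [MvPolynomial.eval_rename]; rfl
        have eB : ∀ q ∈ 𝓕, MvPolynomial.eval
            (fun i : ℕ × Fin r => Complex.exp (-(s i.2) * (Real.log i.1 : ℂ))) (Bt q)
            = MvPolynomial.eval (fun j => Complex.exp (-(s j) * (Real.log q : ℂ))) (B q) :=
          fun q _ => by rw [hBtdef]; simp only; rw [MvPolynomial.eval_rename]; rfl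
        rw [Finset.prod_congr rfl eA, Finset.prod_congr rfl eB, heq s, sub_self]
      rw [MvPolynomial.eval_eq] at h1
      rw [← h1]
      exact Finset.sum_congr rfl fun d hd => by rw [hterm d hd s]
    -- linear independence of the characters
    have hinj : Function.Injective fun d : P.support => chiHom (ν d) := by
      intro d d' hdd'
      have hν' : ν d = ν d' := chiHom_inj hdd'
      have hw' : ∀ j, w (d : (ℕ × Fin r) →₀ ℕ) j = w (d' : (ℕ × Fin r) →₀ ℕ) j := by
        intro j
        have := congrFun hν' j
        rw [hνdef] at this
        simp only at this
        rw [neg_inj, Complex.ofReal_inj] at this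
        exact this
      apply Subtype.ext
      ext i
      rcases i with ⟨q, j⟩
      by_cases hq : q ∈ 𝓕
      · exact prime_log_sum_inj 𝓕 hprime (fun q => (d : (ℕ × Fin r) →₀ ℕ) (q, j))
          (fun q => (d' : (ℕ × Fin r) →₀ ℕ) (q, j)) (hw' j) q hq
      · have h1 : (d : (ℕ × Fin r) →₀ ℕ) (q, j) = 0 := by
          by_contra h0
          exact hq (hvars d d.2 (q, j) (Finsupp.mem_support_iff.2 h0))
        have h2 : (d' : (ℕ × Fin r) →₀ ℕ) (q, j) = 0 := by
          by_contra h0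
          exact hq (hvars d' d'.2 (q, j) (Finsupp.mem_support_iff.2 h0))
        rw [h1, h2]
    have hli : LinearIndependent ℂ fun d : P.support =>
        ((chiHom (ν d) : Multiplicative (Fin r → ℂ) →* ℂ) : Multiplicative (Fin r → ℂ) → ℂ) :=
      (linearIndependent_monoidHom (Multiplicative (Fin r → ℂ)) ℂ).comp _ hinj
    have hcoeff : ∀ d ∈ P.support, MvPolynomial.coeff d P = 0 := by
      intro d hd
      have hsum0 : ∑ d : P.support,
          MvPolynomial.coeff (d : (ℕ × Fin r) →₀ ℕ) P •
            ((chiHom (ν d) : Multiplicative (Fin r → ℂ) →* ℂ) :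
              Multiplicative (Fin r → ℂ) → ℂ) = 0 := by
        funext m
        rw [Finset.sum_apply]
        simp only [Pi.smul_apply, smul_eq_mul, Pi.zero_apply]
        have h2 := hzero (Multiplicative.toAdd m)
        rw [ofAdd_toAdd] at h2
        rw [← h2]
        exact Finset.sum_attach P.support fun d => MvPolynomial.coeff d P * chiHom (ν d) m
      exact Fintype.linearIndependent_iff.1 hli
        (fun d => MvPolynomial.coeff (d : (ℕ × Fin r) →₀ ℕ) P) hsum0 ⟨d, hd⟩
    have hP0 : P = 0 := by
      ext d
      rw [MvPolynomial.coeff_zero]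
      by_cases hd : d ∈ P.support
      · exact hcoeff d hd
      · exact MvPolynomial.notMem_support_iff.1 hd
    exact sub_eq_zero.1 hP0
  -- Step 2: specialize the other variables
  intro p hp
  have hAt0 : ∀ q ∈ 𝓕, At q ≠ 0 := fun q hq h0 => hA q hq
    ((MvPolynomial.rename_injective (Prod.mk q) (fun _ _ h => (Prod.mk.inj h).2)).eq_iff.1
      (by rwa [map_zero]))
  have hBt0 : ∀ q ∈ 𝓕, Bt q ≠ 0 := fun q hq h0 => hB q hq
    ((MvPolynomial.rename_injective (Prod.mk q) (fun _ _ h => (Prod.mk.inj h).2)).eq_iff.1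
      (by rwa [map_zero]))
  have hne : (∏ q ∈ 𝓕.erase p, (At q * Bt q)) ≠ 0 :=
    Finset.prod_ne_zero_iff.2 fun q hq =>
      mul_ne_zero (hAt0 q (Finset.mem_of_mem_erase hq)) (hBt0 q (Finset.mem_of_mem_erase hq))
  obtain ⟨y, hy⟩ : ∃ y : ℕ × Fin r → ℂ,
      MvPolynomial.eval y (∏ q ∈ 𝓕.erase p, (At q * Bt q)) ≠ 0 := by
    by_contra hcon
    push_neg at hcon
    exact hne (MvPolynomial.funext fun x => by rw [hcon x, map_zero])
  set g : ℕ × Fin r → MvPolynomial (Fin r) ℂ :=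
    fun i => if i.1 = p then MvPolynomial.X i.2 else MvPolynomial.C (y i) with hgdef
  have hgA : MvPolynomial.aeval g (At p) = A p := by
    rw [hAtdef]
    simp only
    rw [MvPolynomial.aeval_rename]
    have hcomp : (g ∘ Prod.mk p) = MvPolynomial.X := by
      funext j; simp [hgdef]
    rw [hcomp, MvPolynomial.aeval_X_left_apply]
  have hgB : MvPolynomial.aeval g (Bt p) = B p := by
    rw [hBtdef]
    simp only
    rw [MvPolynomial.aeval_rename]
    have hcomp : (g ∘ Prod.mk p) = MvPolynomial.X := by
      funext j; simp [hgdef]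
    rw [hcomp, MvPolynomial.aeval_X_left_apply]
  have hconstA : ∀ q ∈ 𝓕.erase p, MvPolynomial.aeval g (At q)
      = MvPolynomial.C (MvPolynomial.eval (fun j => y (q, j)) (A q)) := by
    intro q hq
    have hqp : q ≠ p := Finset.ne_of_mem_erase hq
    rw [hAtdef]
    simp only
    rw [MvPolynomial.aeval_rename]
    have hcomp : (g ∘ Prod.mk q) = fun j => MvPolynomial.C (y (q, j)) := by
      funext j; simp [hgdef, hqp]
    rw [hcomp, aeval_C_comp]
  have hconstB : ∀ q ∈ 𝓕.erase p, MvPolynomial.aeval g (Bt q)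
      = MvPolynomial.C (MvPolynomial.eval (fun j => y (q, j)) (B q)) := by
    intro q hq
    have hqp : q ≠ p := Finset.ne_of_mem_erase hq
    rw [hBtdef]
    simp only
    rw [MvPolynomial.aeval_rename]
    have hcomp : (g ∘ Prod.mk q) = fun j => MvPolynomial.C (y (q, j)) := by
      funext j; simp [hgdef, hqp]
    rw [hcomp, aeval_C_comp]
  set a : ℂ := ∏ q ∈ 𝓕.erase p, MvPolynomial.eval (fun j => y (q, j)) (A q) with hadef
  set b : ℂ := ∏ q ∈ 𝓕.erase p, MvPolynomial.eval (fun j => y (q, j)) (B q) with hbdef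
  -- a and b are nonzero
  have hyprod : MvPolynomial.eval y (∏ q ∈ 𝓕.erase p, (At q * Bt q)) = a * b := by
    rw [map_prod, hadef, hbdef, ← Finset.prod_mul_distrib]
    refine Finset.prod_congr rfl fun q hq => ?_
    rw [map_mul, hAtdef, hBtdef]
    simp only
    rw [MvPolynomial.eval_rename, MvPolynomial.eval_rename]
    rfl
  rw [hyprod] at hy
  have ha : a ≠ 0 := fun h0 => hy (by rw [h0, zero_mul])
  have hb : b ≠ 0 := fun h0 => hy (by rw [h0, mul_zero])
  -- apply the specialization to the key identity
  have keyg := congrArg (MvPolynomial.aeval g) key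
  rw [map_prod, map_prod, ← Finset.mul_prod_erase 𝓕 _ hp, ← Finset.mul_prod_erase 𝓕 _ hp,
    hgA, hgB, Finset.prod_congr rfl hconstA, Finset.prod_congr rfl hconstB] at keyg
  rw [← map_prod (MvPolynomial.C : ℂ →+* MvPolynomial (Fin r) ℂ),
    ← map_prod (MvPolynomial.C : ℂ →+* MvPolynomial (Fin r) ℂ), ← hadef, ← hbdef] at keyg
  -- conclude
  refine ⟨b / a, div_ne_zero hb ha, ?_⟩
  have : A p * MvPolynomial.C a * MvPolynomial.C a⁻¹
      = B p * MvPolynomial.C b * MvPolynomial.C a⁻¹ := by rw [keyg]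
  rw [mul_assoc, mul_assoc, ← map_mul, ← map_mul, mul_inv_cancel₀ ha, map_one, mul_one] at this
  rw [this, div_eq_mul_inv, map_mul, mul_comm (B p), mul_assoc]
end

section
/- With the notation below: (1) μ = μ_a ∘ μ_{a−1} ∘ ⋯ ∘ μ_2 ∘ μ_1, and this expression of μ as a composition of a·b adjacent transpositions is reduced, i.e. ℓ(μ) = a·b. (2) For 1 ≤ i ≤ a and 1 ≤ r ≤ b, let l = a+b+i+r−1 if r ≥ 2, and l = a+2b+i+1 if r = 1 and i ≤ a−1. Then w_{i,r} sends the simple root e_{l−1}−e_l to a negative root different from −(e_{l−1}−e_l); explicitly, w_{i,r}(l−1) > w_{i,r}(l), and it is not the case that both w_{i,r}(l−1) = l and w_{i,r}(l) = l−1. -/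
/-- `sw j` is the adjacent transposition `s_j` exchanging `j-1` and `j` (for `j ≥ 2`). -/
def sw (j : ℕ) : Equiv.Perm ℕ := Equiv.swap (j - 1) j

/-- `compSeq f lo len = f lo ∘ f (lo+1) ∘ ⋯ ∘ f (lo+len-1)` (rightmost applied first). -/
def compSeq (f : ℕ → Equiv.Perm ℕ) (lo len : ℕ) : Equiv.Perm ℕ :=
  ((List.range' lo len).map f).prod

/-- `compSeqRev f lo len = f (lo+len-1) ∘ ⋯ ∘ f (lo+1) ∘ f lo` (leftmost is `f (lo+len-1)`). -/
def compSeqRev (f : ℕ → Equiv.Perm ℕ) (lo len : ℕ) : Equiv.Perm ℕ :=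
  ((List.range' lo len).map f).reverse.prod

/-- Number of inversions of `σ` on `{1,…,c}`. -/
def inversions (c : ℕ) (σ : Equiv.Perm ℕ) : ℕ :=
  ((Finset.Icc 1 c ×ˢ Finset.Icc 1 c).filter fun q => q.1 < q.2 ∧ σ q.2 < σ q.1).card

/-- `μ_i = s_{a+b+i+1} ∘ ⋯ ∘ s_{a+b+i+b}`. -/
def mu3 (a b i : ℕ) : Equiv.Perm ℕ := compSeq sw (a + b + i + 1) b

/-- `w_{i,r} = (s_{a+b+i+r} ∘ ⋯ ∘ s_{a+b+i+b}) ∘ (μ_{i−1} ∘ ⋯ ∘ μ_1) ∘ w ∘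
(μ_1⁻¹ ∘ ⋯ ∘ μ_{i−1}⁻¹) ∘ (s_{a+b+i+b}⁻¹ ∘ ⋯ ∘ s_{a+b+i+r}⁻¹)`. -/
def wir3 (a b : ℕ) (w : Equiv.Perm ℕ) (i r : ℕ) : Equiv.Perm ℕ :=
  compSeq sw (a + b + i + r) (b + 1 - r) * compSeqRev (mu3 a b) 1 (i - 1) * w *
    (compSeqRev (mu3 a b) 1 (i - 1))⁻¹ * (compSeq sw (a + b + i + r) (b + 1 - r))⁻¹

/-- Explicit value of the cycle `compSeq sw lo len`. -/
def cyc (lo len x : ℕ) : ℕ :=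
  if lo ≤ x + 1 ∧ x + 2 ≤ lo + len then x + 1
  else if x + 1 = lo + len ∧ 1 ≤ len then lo - 1 else x

lemma compSeq_succ (f : ℕ → Equiv.Perm ℕ) (lo len : ℕ) :
    compSeq f lo (len+1) = f lo * compSeq f (lo+1) len := by
  simp [compSeq, List.range'_succ]

lemma compSeqRev_succ (f : ℕ → Equiv.Perm ℕ) (lo len : ℕ) :
    compSeqRev f lo (len+1) = f (lo+len) * compSeqRev f lo len := by
  simp [compSeqRev, List.range'_concat]

lemma cyc_eq : ∀ len lo x, 1 ≤ lo → compSeq sw lo len x = cyc lo len x := by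
  intro len
  induction len with
  | zero =>
    intro lo x _
    simp only [compSeq, List.range', List.map_nil, List.prod_nil, Equiv.Perm.one_apply]
    unfold cyc; split_ifs <;> omega
  | succ n ih =>
    intro lo x hlo
    rw [compSeq_succ, Equiv.Perm.mul_apply, ih (lo+1) x (by omega)]
    unfold sw cyc
    rw [Equiv.swap_apply_def]
    split_ifs <;> omega

/-- Explicit value of `μ_k ∘ ⋯ ∘ μ_1`. -/
def Mval (a b k x : ℕ) : ℕ :=
  if a+b+1 ≤ x ∧ x ≤ a+2*b then x + k
  else if a+2*b+1 ≤ x ∧ x ≤ a+2*b+k then x - b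
  else x

lemma M_eq (a b : ℕ) : ∀ k x, compSeqRev (mu3 a b) 1 k x = Mval a b k x := by
  intro k
  induction k with
  | zero =>
    intro x
    simp only [compSeqRev, List.range', List.map_nil, List.reverse_nil, List.prod_nil,
      Equiv.Perm.one_apply]
    unfold Mval; split_ifs <;> omega
  | succ n ih =>
    intro x
    rw [compSeqRev_succ, Equiv.Perm.mul_apply, ih x]
    rw [show mu3 a b (1+n) = compSeq sw (a+b+(1+n)+1) b from rfl]
    rw [cyc_eq b (a+b+(1+n)+1) _ (by omega)]
    unfold cyc Mval
    split_ifs <;> omega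

/-- Layout `{1,…,c} = A₁ ∪ A₂ ∪ B₂ ∪ B₁` with `c = 2a+2b`, `|A₁|=|B₁|=a`,
`|A₂|=|B₂|=b`; `w` exchanges `A_k` and `B_k` order-preservingly; `μ` exchanges `B₂` and `B₁`
order-preservingly.  Then (1) `μ = μ_a ∘ ⋯ ∘ μ_1` and this expression by `a·b` adjacent
transpositions is reduced, i.e. `ℓ(μ) = a·b`; (2) for `1 ≤ i ≤ a` and `1 ≤ r ≤ b`, with
`l = a+b+i+r−1` if `r ≥ 2` and `l = a+2b+i+1` if `r = 1` and `i ≤ a−1`, the permutation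
`w_{i,r}` sends the simple root `e_{l−1}−e_l` to a negative root different from its opposite:
`w_{i,r}(l−1) > w_{i,r}(l)` and not both `w_{i,r}(l−1) = l` and `w_{i,r}(l) = l−1`. -/
theorem stmt_3 (a b : ℕ) (ha : 1 ≤ a) (hb : 1 ≤ b)
    (w μ : Equiv.Perm ℕ)
    (hw : ∀ x : ℕ, w x =
      if 1 ≤ x ∧ x ≤ a then x + (a + 2 * b)
      else if a + 1 ≤ x ∧ x ≤ a + b then x + b
      else if a + b + 1 ≤ x ∧ x ≤ a + 2 * b then x - b
      else if a + 2 * b + 1 ≤ x ∧ x ≤ 2 * a + 2 * b then x - (a + 2 * b)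
      else x)
    (hμ : ∀ x : ℕ, μ x =
      if a + b + 1 ≤ x ∧ x ≤ a + 2 * b then x + a
      else if a + 2 * b + 1 ≤ x ∧ x ≤ 2 * a + 2 * b then x - b
      else x) :
    (μ = compSeqRev (mu3 a b) 1 a ∧ inversions (2 * a + 2 * b) μ = a * b) ∧
    (∀ i r l : ℕ, 1 ≤ i → i ≤ a → 1 ≤ r → r ≤ b →
      ((2 ≤ r ∧ l = a + b + i + r - 1) ∨ (r = 1 ∧ i ≤ a - 1 ∧ l = a + 2 * b + i + 1)) →
      wir3 a b w i r l < wir3 a b w i r (l - 1) ∧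
        ¬(wir3 a b w i r (l - 1) = l ∧ wir3 a b w i r l = l - 1)) := by
  constructor
  · constructor
    · ext x
      rw [hμ x, M_eq a b a x]
      unfold Mval; split_ifs <;> omega
    · unfold inversions
      have hset : ((Finset.Icc 1 (2*a+2*b) ×ˢ Finset.Icc 1 (2*a+2*b)).filter
            fun q => q.1 < q.2 ∧ μ q.2 < μ q.1) =
          (Finset.Icc (a+b+1) (a+2*b)) ×ˢ (Finset.Icc (a+2*b+1) (2*a+2*b)) := by
        ext ⟨p, q⟩
        simp only [Finset.mem_filter, Finset.mem_product, Finset.mem_Icc, hμ]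
        constructor
        · intro h
          revert h
          split_ifs <;> omega
        · intro h
          revert h
          split_ifs <;> omega
      rw [hset, Finset.card_product, Nat.card_Icc, Nat.card_Icc]
      have h1 : a+2*b+1-(a+b+1) = b := by omega
      have h2 : 2*a+2*b+1-(a+2*b+1) = a := by omega
      rw [h1, h2, Nat.mul_comm]
  · intro i r l hi1 hia hr1 hrb hcase
    have hTa : ∀ x, compSeq sw (a+b+i+r) (b+1-r) x = cyc (a+b+i+r) (b+1-r) x :=
      fun x => cyc_eq _ _ x (by omega)
    have hMa : ∀ x, compSeqRev (mu3 a b) 1 (i-1) x = Mval a b (i-1) x :=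
      fun x => M_eq a b (i-1) x
    have hTinv : ∀ x y : ℕ, cyc (a+b+i+r) (b+1-r) y = x →
        (compSeq sw (a+b+i+r) (b+1-r))⁻¹ x = y := by
      intro x y h
      rw [← hTa] at h
      rw [← h, ← Equiv.Perm.mul_apply, inv_mul_cancel, Equiv.Perm.one_apply]
    have hMinv : ∀ x y : ℕ, Mval a b (i-1) y = x →
        (compSeqRev (mu3 a b) 1 (i-1))⁻¹ x = y := by
      intro x y h
      rw [← hMa] at h
      rw [← h, ← Equiv.Perm.mul_apply, inv_mul_cancel, Equiv.Perm.one_apply]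
    have happ : ∀ x, wir3 a b w i r x =
        compSeq sw (a+b+i+r) (b+1-r) (compSeqRev (mu3 a b) 1 (i-1)
          (w ((compSeqRev (mu3 a b) 1 (i-1))⁻¹
            ((compSeq sw (a+b+i+r) (b+1-r))⁻¹ x)))) := by
      intro x
      simp [wir3, Equiv.Perm.mul_apply]
    rcases hcase with ⟨hr2, hl⟩ | ⟨hr, hia', hl⟩
    · -- case r ≥ 2, l = a+b+i+r-1
      have vl : wir3 a b w i r l = i := by
        rw [happ,
          hTinv l (a+b+i+b) (by unfold cyc; split_ifs <;> omega),
          hMinv (a+b+i+b) (a+b+i+b) (by unfold Mval; split_ifs <;> omega),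
          show w (a+b+i+b) = i by rw [hw]; split_ifs <;> omega,
          hMa, show Mval a b (i-1) i = i by unfold Mval; split_ifs <;> omega,
          hTa, show cyc (a+b+i+r) (b+1-r) i = i by unfold cyc; split_ifs <;> omega]
      have vl1 : wir3 a b w i r (l-1) = a+r-1 := by
        rw [happ,
          hTinv (l-1) (l-1) (by unfold cyc; split_ifs <;> omega),
          hMinv (l-1) (a+b+r-1) (by unfold Mval; split_ifs <;> omega),
          show w (a+b+r-1) = a+r-1 by rw [hw]; split_ifs <;> omega,
          hMa, show Mval a b (i-1) (a+r-1) = a+r-1 by unfold Mval; split_ifs <;> omega,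
          hTa, show cyc (a+b+i+r) (b+1-r) (a+r-1) = a+r-1 by unfold cyc; split_ifs <;> omega]
      rw [vl, vl1]
      constructor
      · omega
      · rintro ⟨h1, h2⟩; omega
    · -- case r = 1, i ≤ a-1, l = a+2b+i+1
      have vl : wir3 a b w i r l = i+1 := by
        rw [happ,
          hTinv l l (by unfold cyc; split_ifs <;> omega),
          hMinv l l (by unfold Mval; split_ifs <;> omega),
          show w l = i+1 by rw [hw]; split_ifs <;> omega,
          hMa, show Mval a b (i-1) (i+1) = i+1 by unfold Mval; split_ifs <;> omega,
          hTa, show cyc (a+b+i+r) (b+1-r) (i+1) = i+1 by unfold cyc; split_ifs <;> omega]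
      have vl1 : wir3 a b w i r (l-1) = a+b := by
        rw [happ,
          hTinv (l-1) (a+2*b+i-1) (by unfold cyc; split_ifs <;> omega),
          hMinv (a+2*b+i-1) (a+2*b) (by unfold Mval; split_ifs <;> omega),
          show w (a+2*b) = a+b by rw [hw]; split_ifs <;> omega,
          hMa, show Mval a b (i-1) (a+b) = a+b by unfold Mval; split_ifs <;> omega,
          hTa, show cyc (a+b+i+r) (b+1-r) (a+b) = a+b by unfold cyc; split_ifs <;> omega]
      rw [vl, vl1]
      constructor
      · omega
      · rintro ⟨h1, h2⟩; omega
end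

section
/- With the notation below: for 1 ≤ i ≤ a and 2 ≤ r ≤ b, with l = a+b+i+r−1, one has w_{i,r}(l) = i and w_{i,r}(l−1) = a+r−1; and for 1 ≤ i ≤ a−1, with l = a+2b+i+1, one has w_{i,1}(l) = i+1 and w_{i,1}(l−1) = a+b. -/
lemma perm_inv_apply {σ : Equiv.Perm ℕ} {x y : ℕ} (h : σ x = y) : σ⁻¹ y = x := by
  rw [← h]; exact σ.symm_apply_apply x

lemma compSeq_sw_fix (lo len x : ℕ) (h : x + 1 < lo ∨ lo + len ≤ x) :
    compSeq sw lo len x = x := by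
  induction len generalizing lo with
  | zero => simp [compSeq]
  | succ n ih =>
    rw [compSeq_succ, Equiv.Perm.mul_apply, ih (lo+1) (by omega)]
    exact Equiv.swap_apply_of_ne_of_ne (by omega) (by omega)

lemma compSeq_sw_shift (lo len x : ℕ) (h1 : lo ≤ x + 1) (h2 : x + 2 ≤ lo + len) :
    compSeq sw lo len x = x + 1 := by
  induction len generalizing lo with
  | zero => omega
  | succ n ih =>
    rw [compSeq_succ, Equiv.Perm.mul_apply]
    rcases eq_or_lt_of_le h1 with heq | hlt
    · rw [compSeq_sw_fix (lo+1) n x (by omega)]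
      show Equiv.swap (lo-1) lo x = x + 1
      rw [show lo - 1 = x by omega, Equiv.swap_apply_left]
      omega
    · rw [ih (lo+1) (by omega) (by omega)]
      exact Equiv.swap_apply_of_ne_of_ne (by omega) (by omega)

lemma compSeq_sw_top (lo len x : ℕ) (hlen : 1 ≤ len) (hx : x + 1 = lo + len) :
    compSeq sw lo len x = lo - 1 := by
  induction len generalizing lo x with
  | zero => omega
  | succ n ih =>
    rw [compSeq_succ, Equiv.Perm.mul_apply]
    rcases Nat.eq_zero_or_pos n with h0 | hpos
    · subst h0
      have hx0 : x = lo := by omega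
      show Equiv.swap (lo-1) lo (compSeq sw (lo+1) 0 x) = lo - 1
      rw [show compSeq sw (lo+1) 0 x = x from rfl, hx0, Equiv.swap_apply_right]
    · rw [ih (lo+1) x hpos (by omega)]
      show Equiv.swap (lo-1) lo (lo+1-1) = lo - 1
      simp [Equiv.swap_apply_right]
lemma mu3_fix (a b j x : ℕ) (h : x < a + b + j ∨ a + 2*b + j + 1 ≤ x) :
    mu3 a b j x = x :=
  compSeq_sw_fix (a+b+j+1) b x (by omega)

lemma mu3_shift (a b j x : ℕ) (h1 : a + b + j ≤ x) (h2 : x + 1 ≤ a + 2*b + j) :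
    mu3 a b j x = x + 1 :=
  compSeq_sw_shift (a+b+j+1) b x (by omega) (by omega)

lemma P_fix_low (a b n x : ℕ) (hx : x ≤ a + b) :
    compSeqRev (mu3 a b) 1 n x = x := by
  induction n with
  | zero => simp [compSeqRev]
  | succ m ih =>
    rw [compSeqRev_succ, Equiv.Perm.mul_apply, ih]
    exact mu3_fix a b (1+m) x (by omega)

lemma P_inv_fix_low (a b n x : ℕ) (hx : x ≤ a + b) :
    (compSeqRev (mu3 a b) 1 n)⁻¹ x = x :=
  perm_inv_apply (P_fix_low a b n x hx)

lemma P_inv_fix_high (a b n x : ℕ) (hx : a + 2*b + n + 1 ≤ x) :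
    (compSeqRev (mu3 a b) 1 n)⁻¹ x = x := by
  induction n with
  | zero => simp [compSeqRev]
  | succ m ih =>
    rw [compSeqRev_succ, mul_inv_rev, Equiv.Perm.mul_apply,
      perm_inv_apply (mu3_fix a b (1+m) x (by omega))]
    exact ih (by omega)

lemma P_inv_shift (a b n s : ℕ) (h1 : 1 ≤ s) (h2 : s ≤ b) :
    (compSeqRev (mu3 a b) 1 n)⁻¹ (a + b + n + s) = a + b + s := by
  induction n with
  | zero => simp [compSeqRev]
  | succ m ih =>
    rw [compSeqRev_succ, mul_inv_rev, Equiv.Perm.mul_apply]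
    have h3 : mu3 a b (1+m) (a+b+m+s) = a+b+m+s+1 :=
      mu3_shift a b (1+m) (a+b+m+s) (by omega) (by omega)
    rw [show a+b+(m+1)+s = a+b+m+s+1 by omega, perm_inv_apply h3]
    exact ih

/-- Layout `{1,…,c} = A₁ ∪ A₂ ∪ B₂ ∪ B₁` with `c = 2a+2b`, `|A₁|=|B₁|=a`,
`|A₂|=|B₂|=b`; `w` exchanges `A_k` and `B_k` order-preservingly.  For `1 ≤ i ≤ a` and
`2 ≤ r ≤ b`, with `l = a+b+i+r−1`, one has `w_{i,r}(l) = i` and `w_{i,r}(l−1) = a+r−1`;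
and for `1 ≤ i ≤ a−1`, with `l = a+2b+i+1`, one has `w_{i,1}(l) = i+1` and
`w_{i,1}(l−1) = a+b`. -/
theorem stmt_4 (a b : ℕ) (ha : 1 ≤ a) (hb : 1 ≤ b)
    (w : Equiv.Perm ℕ)
    (hw : ∀ x : ℕ, w x =
      if 1 ≤ x ∧ x ≤ a then x + (a + 2 * b)
      else if a + 1 ≤ x ∧ x ≤ a + b then x + b
      else if a + b + 1 ≤ x ∧ x ≤ a + 2 * b then x - b
      else if a + 2 * b + 1 ≤ x ∧ x ≤ 2 * a + 2 * b then x - (a + 2 * b)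
      else x) :
    (∀ i r : ℕ, 1 ≤ i → i ≤ a → 2 ≤ r → r ≤ b →
      wir3 a b w i r (a + b + i + r - 1) = i ∧
        wir3 a b w i r (a + b + i + r - 2) = a + r - 1) ∧
    (∀ i : ℕ, 1 ≤ i → i ≤ a - 1 →
      wir3 a b w i 1 (a + 2 * b + i + 1) = i + 1 ∧
        wir3 a b w i 1 (a + 2 * b + i) = a + b) := by
  constructor
  · intro i r hi1 hia hr2 hrb
    obtain ⟨i, rfl⟩ : ∃ t, i = t + 1 := ⟨i - 1, by omega⟩
    obtain ⟨r, rfl⟩ : ∃ t, r = t + 2 := ⟨r - 2, by omega⟩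
    have hunfold : ∀ x, wir3 a b w (i+1) (r+2) x =
        compSeq sw (a+b+(i+1)+(r+2)) (b+1-(r+2))
          ((compSeqRev (mu3 a b) 1 i) (w ((compSeqRev (mu3 a b) 1 i)⁻¹
            ((compSeq sw (a+b+(i+1)+(r+2)) (b+1-(r+2)))⁻¹ x)))) := fun x => rfl
    constructor
    · rw [hunfold]
      have e1 : (compSeq sw (a+b+(i+1)+(r+2)) (b+1-(r+2)))⁻¹ (a+b+(i+1)+(r+2)-1)
          = a+2*b+(i+1) :=
        perm_inv_apply (compSeq_sw_top (a+b+(i+1)+(r+2)) (b+1-(r+2)) (a+2*b+(i+1))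
          (by omega) (by omega))
      have e2 : (compSeqRev (mu3 a b) 1 i)⁻¹ (a+2*b+(i+1)) = a+2*b+(i+1) :=
        P_inv_fix_high a b i _ (by omega)
      have e3 : w (a+2*b+(i+1)) = i+1 := by rw [hw]; split_ifs <;> omega
      have e4 : compSeqRev (mu3 a b) 1 i (i+1) = i+1 := P_fix_low a b i _ (by omega)
      have e5 : compSeq sw (a+b+(i+1)+(r+2)) (b+1-(r+2)) (i+1) = i+1 :=
        compSeq_sw_fix _ _ _ (by omega)
      rw [e1, e2, e3, e4, e5]
    · rw [hunfold]
      have f1 : (compSeq sw (a+b+(i+1)+(r+2)) (b+1-(r+2)))⁻¹ (a+b+(i+1)+(r+2)-2)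
          = a+b+(i+1)+(r+2)-2 :=
        perm_inv_apply (compSeq_sw_fix _ _ _ (by omega))
      have f2 : (compSeqRev (mu3 a b) 1 i)⁻¹ (a+b+(i+1)+(r+2)-2) = a+b+(r+1) := by
        rw [show a+b+(i+1)+(r+2)-2 = a+b+i+(r+1) by omega]
        exact P_inv_shift a b i (r+1) (by omega) (by omega)
      have f3 : w (a+b+(r+1)) = a+(r+1) := by rw [hw]; split_ifs <;> omega
      have f4 : compSeqRev (mu3 a b) 1 i (a+(r+1)) = a+(r+1) :=
        P_fix_low a b i _ (by omega)
      have f5 : compSeq sw (a+b+(i+1)+(r+2)) (b+1-(r+2)) (a+(r+1)) = a+(r+1) :=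
        compSeq_sw_fix _ _ _ (by omega)
      rw [f1, f2, f3, f4, f5]
      omega
  · intro i hi1 hia
    obtain ⟨i, rfl⟩ : ∃ t, i = t + 1 := ⟨i - 1, by omega⟩
    have hunfold : ∀ x, wir3 a b w (i+1) 1 x =
        compSeq sw (a+b+(i+1)+1) b
          ((compSeqRev (mu3 a b) 1 i) (w ((compSeqRev (mu3 a b) 1 i)⁻¹
            ((compSeq sw (a+b+(i+1)+1) b)⁻¹ x)))) := fun x => rfl
    constructor
    · rw [hunfold]
      have g1 : (compSeq sw (a+b+(i+1)+1) b)⁻¹ (a+2*b+(i+1)+1) = a+2*b+(i+1)+1 :=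
        perm_inv_apply (compSeq_sw_fix _ _ _ (by omega))
      have g2 : (compSeqRev (mu3 a b) 1 i)⁻¹ (a+2*b+(i+1)+1) = a+2*b+(i+1)+1 :=
        P_inv_fix_high a b i _ (by omega)
      have g3 : w (a+2*b+(i+1)+1) = i+1+1 := by rw [hw]; split_ifs <;> omega
      have g4 : compSeqRev (mu3 a b) 1 i (i+1+1) = i+1+1 := P_fix_low a b i _ (by omega)
      have g5 : compSeq sw (a+b+(i+1)+1) b (i+1+1) = i+1+1 :=
        compSeq_sw_fix _ _ _ (by omega)
      rw [g1, g2, g3, g4, g5]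
    · rw [hunfold]
      have g1 : (compSeq sw (a+b+(i+1)+1) b)⁻¹ (a+2*b+(i+1)) = a+2*b+i := by
        have h := compSeq_sw_shift (a+b+(i+1)+1) b (a+2*b+i) (by omega) (by omega)
        rw [show a+2*b+(i+1) = a+2*b+i+1 by omega]
        exact perm_inv_apply h
      have g2 : (compSeqRev (mu3 a b) 1 i)⁻¹ (a+2*b+i) = a+b+b := by
        rw [show a+2*b+i = a+b+i+b by omega]
        exact P_inv_shift a b i b hb le_rfl
      have g3 : w (a+b+b) = a+b := by rw [hw]; split_ifs <;> omega
      have g4 : compSeqRev (mu3 a b) 1 i (a+b) = a+b := P_fix_low a b i _ (by omega)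
      have g5 : compSeq sw (a+b+(i+1)+1) b (a+b) = a+b :=
        compSeq_sw_fix _ _ _ (by omega)
      rw [g1, g2, g3, g4, g5]
end

section
/- For every a ∈ I(m̄), the matrix u_a is invertible, and w_a := u_a · θ(u_a)^{-1} is the permutation matrix of the permutation σ_a of {1,…,m} that fixes each interval I_{i,i} pointwise and, for i ≠ j, maps I_{i,j} order-preservingly onto I_{j,i}. In particular σ_a is an involution, i.e. w_a² = Id. Moreover the map a ↦ w_a from I(m̄) to m×m permutation matrices is injective. -/
/-- Reading the symmetric matrix `a : ℕ → ℕ → ℕ` (of size `t`) in row-major order, `offI t a n`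
is the starting position (0-indexed) of the `n`-th block, i.e. the sum of the sizes of the
blocks of row-major rank `< n`. -/
def offI (t : ℕ) (a : ℕ → ℕ → ℕ) (n : ℕ) : ℕ :=
  ∑ k ∈ Finset.range n, a (k / t) (k % t)

/-- The row-major rank of the block `I_{i,j}` containing a given (0-indexed) position `x`. -/
def blockOfI (t : ℕ) (a : ℕ → ℕ → ℕ) (x : ℕ) : ℕ :=
  Nat.findGreatest (fun n => offI t a n ≤ x) (t * t)

/-- `mateI t a x` : if `x` is the `k`-th element of the interval `I_{i,j}`, its mate is the
`k`-th element of `I_{j,i}`.  The map `x ↦ mateI t a x` is the permutation `σ_a` fixing every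
`I_{i,i}` pointwise and exchanging `I_{i,j}` and `I_{j,i}` order-preservingly. -/
def mateI (t : ℕ) (a : ℕ → ℕ → ℕ) (x : ℕ) : ℕ :=
  offI t a ((blockOfI t a x % t) * t + blockOfI t a x / t) + (x - offI t a (blockOfI t a x))

/-- `a ∈ I(m̄)` : `a` is symmetric, supported on `{0,…,t-1}²`, with `i`-th row sum `m̄ i`. -/
def memI (t : ℕ) (mbar : ℕ → ℕ) (a : ℕ → ℕ → ℕ) : Prop :=
  (∀ i j, a i j = a j i) ∧ (∀ i j, t ≤ i ∨ t ≤ j → a i j = 0) ∧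
    (∀ i, i < t → ∑ j ∈ Finset.range t, a i j = mbar i)

/-- The matrix `u_a` : identity on the diagonal blocks `I_{i,i} × I_{i,i}` and, for `i < j`,
the block `[[Id, −δ·Id],[Id, δ·Id]]` on rows/columns `I_{i,j} ∪ I_{j,i}`. -/
def uMat (t m : ℕ) (a : ℕ → ℕ → ℕ) {R : Type*} [Ring R] (δ : R) :
    Matrix (Fin m) (Fin m) R :=
  Matrix.of fun x y : Fin m =>
    if blockOfI t a (x : ℕ) / t ≤ blockOfI t a (x : ℕ) % t then
      if (y : ℕ) = (x : ℕ) then 1 else if (y : ℕ) = mateI t a (x : ℕ) then -δ else 0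
    else
      if (y : ℕ) = mateI t a (x : ℕ) then 1 else if (y : ℕ) = (x : ℕ) then δ else 0

/-- The permutation matrix of the involution `σ_a = mateI t a`. -/
def wMat (t m : ℕ) (a : ℕ → ℕ → ℕ) (R : Type*) [Ring R] : Matrix (Fin m) (Fin m) R :=
  Matrix.of fun x y : Fin m => if (y : ℕ) = mateI t a (x : ℕ) then 1 else 0

namespace Stmt7Aux

variable {t : ℕ} {A : ℕ → ℕ → ℕ} {mbar : ℕ → ℕ} {m : ℕ}

lemma offI_mono {n n' : ℕ} (h : n ≤ n') : offI t A n ≤ offI t A n' :=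
  Finset.sum_le_sum_of_subset (Finset.range_subset_range.mpr h)

lemma offI_succ (n : ℕ) : offI t A (n + 1) = offI t A n + A (n / t) (n % t) :=
  Finset.sum_range_succ _ _

lemma div_block {i j : ℕ} (hj : j < t) : (i * t + j) / t = i := by
  have ht : 0 < t := lt_of_le_of_lt (Nat.zero_le _) hj
  rw [mul_comm, Nat.mul_add_div ht, Nat.div_eq_of_lt hj, add_zero]

lemma mod_block {i j : ℕ} (hj : j < t) : (i * t + j) % t = j := by
  rw [mul_comm, Nat.mul_add_mod, Nat.mod_eq_of_lt hj]

lemma block_lt_sq {i j : ℕ} (hi : i < t) (hj : j < t) : i * t + j < t * t := by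
  have h2 : i * t + 1 * t ≤ t * t := by
    rw [← add_mul]; exact Nat.mul_le_mul_right t hi
  omega

lemma block_order {i j : ℕ} (hij : i < j) (hj : j < t) : i * t + j + 1 ≤ j * t + i := by
  have h1 : i * t + 1 * t ≤ j * t := by
    rw [← add_mul]; exact Nat.mul_le_mul_right t hij
  omega

lemma offI_row (hA : memI t mbar A) {i : ℕ} (hi : i ≤ t) :
    offI t A (i * t) = ∑ k ∈ Finset.range i, mbar k := by
  induction i with
  | zero => simp [offI]
  | succ i ih =>
    have hit : i < t := hi
    have : (i + 1) * t = i * t + t := by ring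
    rw [this, offI, Finset.sum_range_add, ← offI, ih (le_of_lt hit),
      Finset.sum_range_succ]
    congr 1
    rw [← hA.2.2 i hit]
    exact Finset.sum_congr rfl fun j hj => by
      rw [div_block (Finset.mem_range.mp hj), mod_block (Finset.mem_range.mp hj)]

lemma offI_tt (hA : memI t mbar A) (hm : m = ∑ i ∈ Finset.range t, mbar i) :
    offI t A (t * t) = m := by
  rw [offI_row hA le_rfl, hm]

lemma blockOfI_spec (hA : memI t mbar A) (hm : m = ∑ i ∈ Finset.range t, mbar i)
    {x : ℕ} (hx : x < m) :
    blockOfI t A x < t * t ∧ offI t A (blockOfI t A x) ≤ x ∧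
      x < offI t A (blockOfI t A x + 1) := by
  have hP : offI t A (blockOfI t A x) ≤ x :=
    Nat.findGreatest_spec (P := fun n => offI t A n ≤ x) (n := t * t)
      (Nat.zero_le _) (by simp [offI])
  have hle : blockOfI t A x ≤ t * t :=
    Nat.findGreatest_le (P := fun n => offI t A n ≤ x) _
  have hlt : blockOfI t A x < t * t := by
    rcases lt_or_eq_of_le hle with h | h
    · exact h
    · exfalso; rw [h, offI_tt hA hm] at hP; omega
  refine ⟨hlt, hP, ?_⟩
  have h3 := Nat.findGreatest_is_greatest (k := blockOfI t A x + 1)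
    (P := fun n => offI t A n ≤ x) (Nat.lt_succ_self _) hlt
  simp only [not_le] at h3
  exact h3

lemma blockOfI_eq {n x : ℕ} (hn : n < t * t) (h1 : offI t A n ≤ x)
    (h2 : x < offI t A (n + 1)) : blockOfI t A x = n := by
  have hle : n ≤ blockOfI t A x :=
    Nat.le_findGreatest (P := fun k => offI t A k ≤ x) (le_of_lt hn) h1
  rcases lt_or_eq_of_le hle with h | h
  · exfalso
    have hP : offI t A (blockOfI t A x) ≤ x :=
      Nat.findGreatest_spec (P := fun n => offI t A n ≤ x) (n := t * t)
        (Nat.zero_le _) (by simp [offI])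
    have : offI t A (n + 1) ≤ offI t A (blockOfI t A x) := offI_mono h
    omega
  · omega

lemma blockOfI_block {i j k : ℕ} (hi : i < t) (hj : j < t) (hk : k < A i j) :
    blockOfI t A (offI t A (i * t + j) + k) = i * t + j := by
  apply blockOfI_eq (block_lt_sq hi hj) (Nat.le_add_right _ _)
  rw [offI_succ, div_block hj, mod_block hj]
  omega

lemma mateI_block {i j k : ℕ} (hi : i < t) (hj : j < t) (hk : k < A i j) :
    mateI t A (offI t A (i * t + j) + k) = offI t A (j * t + i) + k := by
  unfold mateI
  rw [blockOfI_block hi hj hk, div_block hj, mod_block hj, Nat.add_sub_cancel_left]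

lemma block_ex (hA : memI t mbar A) (hm : m = ∑ i ∈ Finset.range t, mbar i)
    {x : ℕ} (hx : x < m) :
    ∃ i j k, i < t ∧ j < t ∧ k < A i j ∧ x = offI t A (i * t + j) + k := by
  obtain ⟨hlt, h1, h2⟩ := blockOfI_spec hA hm hx
  set n := blockOfI t A x with hn
  have ht : 0 < t := by
    rcases Nat.eq_zero_or_pos t with h | h
    · subst h; simp at hlt
    · exact h
  have hd : n / t < t := Nat.div_lt_of_lt_mul hlt
  have hmo : n % t < t := Nat.mod_lt _ ht
  have hnd : n / t * t + n % t = n := by rw [mul_comm]; exact Nat.div_add_mod n t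
  rw [offI_succ] at h2
  have hklt : x - offI t A n < A (n / t) (n % t) := by omega
  refine ⟨n / t, n % t, x - offI t A n, hd, hmo, hklt, ?_⟩
  rw [hnd]; omega

lemma mate_lt (hA : memI t mbar A) (hm : m = ∑ i ∈ Finset.range t, mbar i)
    {x : ℕ} (hx : x < m) : mateI t A x < m := by
  obtain ⟨i, j, k, hi, hj, hk, hxe⟩ := block_ex hA hm hx
  rw [hxe, mateI_block hi hj hk]
  have hk' : k < A j i := by rw [hA.1 j i]; exact hk
  calc offI t A (j * t + i) + k < offI t A (j * t + i + 1) := by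
        rw [offI_succ, div_block hi, mod_block hi]; omega
    _ ≤ offI t A (t * t) := offI_mono (block_lt_sq hj hi)
    _ = m := offI_tt hA hm

lemma mate_mate (hA : memI t mbar A) (hm : m = ∑ i ∈ Finset.range t, mbar i)
    {x : ℕ} (hx : x < m) : mateI t A (mateI t A x) = x := by
  obtain ⟨i, j, k, hi, hj, hk, hxe⟩ := block_ex hA hm hx
  have hk' : k < A j i := by rw [hA.1 j i]; exact hk
  rw [hxe, mateI_block hi hj hk, mateI_block hj hi hk']


lemma fin_block (hA : memI t mbar A) (hm : m = ∑ i ∈ Finset.range t, mbar i)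
    {x : ℕ} (hx : x < m) :
    ∃ i j k, i < t ∧ j < t ∧ k < A i j ∧ x = offI t A (i * t + j) + k ∧
      blockOfI t A x / t = i ∧ blockOfI t A x % t = j ∧
      mateI t A x = offI t A (j * t + i) + k ∧
      blockOfI t A (mateI t A x) / t = j ∧ blockOfI t A (mateI t A x) % t = i ∧
      mateI t A (mateI t A x) = x ∧ mateI t A x < m := by
  obtain ⟨i, j, k, hi, hj, hk, hxe⟩ := block_ex hA hm hx
  have hk' : k < A j i := by rw [hA.1 j i]; exact hk
  have hbx : blockOfI t A x = i * t + j := by rw [hxe]; exact blockOfI_block hi hj hk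
  have hmx : mateI t A x = offI t A (j * t + i) + k := by
    rw [hxe]; exact mateI_block hi hj hk
  have hbm : blockOfI t A (mateI t A x) = j * t + i := by
    rw [hmx]; exact blockOfI_block hj hi hk'
  have hmm : mateI t A (mateI t A x) = x := by
    rw [hmx, mateI_block hj hi hk', hxe]
  refine ⟨i, j, k, hi, hj, hk, hxe, by rw [hbx, div_block hj], by rw [hbx, mod_block hj],
    hmx, by rw [hbm, div_block hi], by rw [hbm, mod_block hi], hmm,
    mate_lt hA hm hx⟩

/-- explicit inverse of `uMat`. -/
def vMat (t m : ℕ) (a : ℕ → ℕ → ℕ) {R : Type*} [DivisionRing R] (γ : R) :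
    Matrix (Fin m) (Fin m) R :=
  Matrix.of fun x y : Fin m =>
    if blockOfI t a (x : ℕ) / t ≤ blockOfI t a (x : ℕ) % t then
      ((if (y : ℕ) = (x : ℕ) then 1 else 0) +
        (if (y : ℕ) = mateI t a (x : ℕ) then 1 else 0)) * 2⁻¹
    else
      ((if (y : ℕ) = (x : ℕ) then 1 else 0) -
        (if (y : ℕ) = mateI t a (x : ℕ) then 1 else 0)) * (2 * γ)⁻¹

lemma mate_gt {i j k : ℕ} (hi : i < t) (hj : j < t) (hk : k < A i j) (hij : i < j) :
    offI t A (i * t + j) + k < offI t A (j * t + i) + k :=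
  calc offI t A (i * t + j) + k < offI t A (i * t + j + 1) := by
        rw [offI_succ, div_block hj, mod_block hj]; omega
    _ ≤ offI t A (j * t + i) := offI_mono (block_order hij hj)
    _ ≤ offI t A (j * t + i) + k := Nat.le_add_right _ _

lemma sum_ite_mul {R : Type*} [Ring R] (c : Fin m) (r : R) (g : Fin m → R) :
    ∑ z : Fin m, (if z = c then r else 0) * g z = r * g c := by
  have : ∀ z : Fin m, (if z = c then r else 0) * g z = if z = c then r * g z else 0 := by
    intro z; by_cases h : z = c <;> simp [h]
  rw [Finset.sum_congr rfl fun z _ => this z, Finset.sum_ite_eq' Finset.univ c]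
  simp

lemma wMat_mul_uMat (hA : memI t mbar A) (hm : m = ∑ i ∈ Finset.range t, mbar i)
    {R : Type*} [Ring R] (γ : R) :
    wMat t m A R * uMat t m A γ = uMat t m A (-γ) := by
  ext x y
  rw [Matrix.mul_apply]
  obtain ⟨i, j, k, hi, hj, hk, hxe, hbxd, hbxm, hmx, hbmd, hbmm, hmm, hmlt⟩ :=
    fin_block hA hm x.isLt
  obtain ⟨x', hx'v⟩ : ∃ x' : Fin m, (x' : ℕ) = mateI t A (x : ℕ) := ⟨⟨_, hmlt⟩, rfl⟩
  have hrow : ∀ z : Fin m, wMat t m A R x z * uMat t m A γ z y =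
      (if z = x' then (1 : R) else 0) * uMat t m A γ z y := by
    intro z
    have hc : ((z : ℕ) = mateI t A (x : ℕ)) = (z = x') := by
      rw [← hx'v, Fin.val_eq_val]
    simp only [wMat, Matrix.of_apply, hc]
  rw [Finset.sum_congr rfl fun z _ => hrow z, sum_ite_mul, one_mul]
  simp only [uMat, Matrix.of_apply, hx'v, hbxd, hbxm, hbmd, hbmm, hmm]
  rcases Nat.lt_trichotomy i j with h | h | h
  · rw [if_neg (by omega : ¬ j ≤ i), if_pos (le_of_lt h), neg_neg]
  · subst h
    have hmxx : mateI t A (x : ℕ) = (x : ℕ) := by rw [hmx, ← hxe]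
    simp only [hmxx, le_refl, if_true]
    by_cases hy : (y : ℕ) = (x : ℕ) <;> simp [hy]
  · rw [if_pos (le_of_lt h), if_neg (by omega : ¬ i ≤ j)]

lemma uMat_mul_vMat (hA : memI t mbar A) (hm : m = ∑ i ∈ Finset.range t, mbar i)
    {R : Type*} [Field R] {γ : R} (h2 : (2 : R) ≠ 0) (hγ : γ ≠ 0) :
    uMat t m A γ * vMat t m A γ = 1 := by
  have e1 : (1 + 0 : R) * 2⁻¹ + -γ * ((0 - 1) * (2 * γ)⁻¹) = 1 := by field_simp; ring
  have e2 : (0 + 1 : R) * 2⁻¹ + -γ * ((1 - 0) * (2 * γ)⁻¹) = 0 := by field_simp; ring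
  have e3 : (0 + 1 : R) * 2⁻¹ + γ * ((1 - 0) * (2 * γ)⁻¹) = 1 := by field_simp; ring
  have e4 : (1 + 0 : R) * 2⁻¹ + γ * ((0 - 1) * (2 * γ)⁻¹) = 0 := by field_simp; ring
  ext x y
  rw [Matrix.mul_apply, Matrix.one_apply]
  obtain ⟨i, j, k, hi, hj, hk, hxe, hbxd, hbxm, hmx, hbmd, hbmm, hmm, hmlt⟩ :=
    fin_block hA hm x.isLt
  have hk' : k < A j i := by rw [hA.1 j i]; exact hk
  obtain ⟨x', hx'v⟩ : ∃ x' : Fin m, (x' : ℕ) = mateI t A (x : ℕ) := ⟨⟨_, hmlt⟩, rfl⟩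
  have hcz : ∀ z : Fin m, ((z : ℕ) = mateI t A (x : ℕ)) = (z = x') := fun z => by
    rw [← hx'v, Fin.val_eq_val]
  have hxy : (x = y) = ((y : ℕ) = (x : ℕ)) :=
    propext ⟨fun h => (congrArg Fin.val h).symm, fun h => Fin.ext h.symm⟩
  rcases Nat.lt_trichotomy i j with hij | hij | hij
  · -- i < j
    have hne : (x : ℕ) ≠ mateI t A (x : ℕ) := by
      rw [hmx, hxe]; exact Nat.ne_of_lt (mate_gt hi hj hk hij)
    have hrow : ∀ z : Fin m, uMat t m A γ x z =
        (if z = x then (1 : R) else 0) + (if z = x' then -γ else 0) := by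
      intro z
      simp only [uMat, Matrix.of_apply, hbxd, hbxm, if_pos (le_of_lt hij), hcz z]
      by_cases hz1 : (z : ℕ) = (x : ℕ)
      · have hzx : z = x := Fin.ext hz1
        have hzx' : z ≠ x' := fun h =>
          hne (hz1.symm.trans ((congrArg Fin.val h).trans hx'v))
        simp only [if_pos hz1, if_pos hzx, if_neg hzx', add_zero]
      · have hzx : z ≠ x := fun h => hz1 (congrArg Fin.val h)
        simp only [if_neg hz1, if_neg hzx, zero_add]
    have hsum : ∑ z : Fin m, uMat t m A γ x z * vMat t m A γ z y =
        ∑ z : Fin m, ((if z = x then (1 : R) else 0) * vMat t m A γ z y +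
          (if z = x' then -γ else 0) * vMat t m A γ z y) :=
      Finset.sum_congr rfl fun z _ => by rw [hrow z, add_mul]
    rw [hsum, Finset.sum_add_distrib, sum_ite_mul, sum_ite_mul, one_mul]
    have hVx : vMat t m A γ x y = ((if (y : ℕ) = (x : ℕ) then (1 : R) else 0) +
        (if (y : ℕ) = mateI t A (x : ℕ) then 1 else 0)) * 2⁻¹ := by
      simp only [vMat, Matrix.of_apply, hbxd, hbxm, if_pos (le_of_lt hij)]
    have hVx' : vMat t m A γ x' y = ((if (y : ℕ) = mateI t A (x : ℕ) then (1 : R) else 0) -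
        (if (y : ℕ) = (x : ℕ) then 1 else 0)) * (2 * γ)⁻¹ := by
      simp only [vMat, Matrix.of_apply, hx'v, hbmd, hbmm, hmm, if_neg (by omega : ¬ j ≤ i)]
    rw [hVx, hVx']
    simp only [hxy]
    by_cases hy1 : (y : ℕ) = (x : ℕ)
    · have hy2 : ¬ (y : ℕ) = mateI t A (x : ℕ) := fun h => hne (hy1 ▸ h)
      simp only [if_pos hy1, if_neg hy2]
      exact e1
    · simp only [if_neg hy1]
      by_cases hy2 : (y : ℕ) = mateI t A (x : ℕ)
      · simp only [if_pos hy2]; exact e2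
      · simp only [if_neg hy2]; simp
  · -- i = j
    subst hij
    have hmxx : mateI t A (x : ℕ) = (x : ℕ) := by rw [hmx, ← hxe]
    have hrow : ∀ z : Fin m, uMat t m A γ x z = if z = x then (1 : R) else 0 := by
      intro z
      simp only [uMat, Matrix.of_apply, hbxd, hbxm, if_pos le_rfl, hmxx]
      by_cases hz : (z : ℕ) = (x : ℕ)
      · simp only [if_pos hz, if_pos (Fin.ext hz)]
      · simp only [if_neg hz, if_neg (fun h : z = x => hz (congrArg Fin.val h))]
    have hsum : ∑ z : Fin m, uMat t m A γ x z * vMat t m A γ z y =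
        ∑ z : Fin m, (if z = x then (1 : R) else 0) * vMat t m A γ z y :=
      Finset.sum_congr rfl fun z _ => by rw [hrow z]
    rw [hsum, sum_ite_mul, one_mul]
    simp only [vMat, Matrix.of_apply, hbxd, hbxm, if_pos le_rfl, hmxx]
    simp only [hxy]
    by_cases hy : (y : ℕ) = (x : ℕ)
    · simp only [if_pos hy]
      rw [one_add_one_eq_two, mul_inv_cancel₀ h2]
    · simp only [if_neg hy]; simp
  · -- j < i
    have hne : mateI t A (x : ℕ) ≠ (x : ℕ) := by
      rw [hmx, hxe]; exact Nat.ne_of_lt (mate_gt hj hi hk' hij)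
    have hrow : ∀ z : Fin m, uMat t m A γ x z =
        (if z = x' then (1 : R) else 0) + (if z = x then γ else 0) := by
      intro z
      simp only [uMat, Matrix.of_apply, hbxd, hbxm, if_neg (by omega : ¬ i ≤ j), hcz z]
      by_cases hz1 : z = x'
      · have hz1v : (z : ℕ) = mateI t A (x : ℕ) := (congrArg Fin.val hz1).trans hx'v
        have hzx : z ≠ x := fun h =>
          hne (hz1v.symm.trans (congrArg Fin.val h))
        simp only [if_pos hz1, if_neg (fun h : (z:ℕ) = (x:ℕ) =>
          hne (hz1v.symm.trans h)), if_neg hzx, add_zero]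
      · simp only [if_neg hz1, zero_add]
        by_cases hz2 : (z : ℕ) = (x : ℕ)
        · simp only [if_pos hz2, if_pos (Fin.ext hz2)]
        · simp only [if_neg hz2, if_neg (fun h : z = x => hz2 (congrArg Fin.val h))]
    have hsum : ∑ z : Fin m, uMat t m A γ x z * vMat t m A γ z y =
        ∑ z : Fin m, ((if z = x' then (1 : R) else 0) * vMat t m A γ z y +
          (if z = x then γ else 0) * vMat t m A γ z y) :=
      Finset.sum_congr rfl fun z _ => by rw [hrow z, add_mul]
    rw [hsum, Finset.sum_add_distrib, sum_ite_mul, sum_ite_mul, one_mul]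
    have hVx' : vMat t m A γ x' y = ((if (y : ℕ) = mateI t A (x : ℕ) then (1 : R) else 0) +
        (if (y : ℕ) = (x : ℕ) then 1 else 0)) * 2⁻¹ := by
      simp only [vMat, Matrix.of_apply, hx'v, hbmd, hbmm, hmm, if_pos (le_of_lt hij)]
    have hVx : vMat t m A γ x y = ((if (y : ℕ) = (x : ℕ) then (1 : R) else 0) -
        (if (y : ℕ) = mateI t A (x : ℕ) then 1 else 0)) * (2 * γ)⁻¹ := by
      simp only [vMat, Matrix.of_apply, hbxd, hbxm, if_neg (by omega : ¬ i ≤ j)]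
    rw [hVx, hVx']
    simp only [hxy]
    by_cases hy1 : (y : ℕ) = (x : ℕ)
    · have hy2 : ¬ (y : ℕ) = mateI t A (x : ℕ) := fun h => hne (hy1 ▸ h).symm
      simp only [if_pos hy1, if_neg hy2]
      exact e3
    · simp only [if_neg hy1]
      by_cases hy2 : (y : ℕ) = mateI t A (x : ℕ)
      · simp only [if_pos hy2]; exact e4
      · simp only [if_neg hy2]; simp
  
lemma wMat_mul_wMat (hA : memI t mbar A) (hm : m = ∑ i ∈ Finset.range t, mbar i)
    (R : Type*) [Ring R] : wMat t m A R * wMat t m A R = 1 := by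
  ext x y
  rw [Matrix.mul_apply, Matrix.one_apply]
  have hmlt : mateI t A (x : ℕ) < m := mate_lt hA hm x.isLt
  obtain ⟨x', hx'v⟩ : ∃ x' : Fin m, (x' : ℕ) = mateI t A (x : ℕ) := ⟨⟨_, hmlt⟩, rfl⟩
  have hrow : ∀ z : Fin m, wMat t m A R x z * wMat t m A R z y =
      (if z = x' then (1 : R) else 0) * wMat t m A R z y := by
    intro z
    have hc : ((z : ℕ) = mateI t A (x : ℕ)) = (z = x') := by
      rw [← hx'v, Fin.val_eq_val]
    simp only [wMat, Matrix.of_apply, hc]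
  rw [Finset.sum_congr rfl fun z _ => hrow z, sum_ite_mul, one_mul]
  simp only [wMat, Matrix.of_apply, hx'v, mate_mate hA hm x.isLt]
  by_cases hy : (y : ℕ) = (x : ℕ)
  · rw [if_pos hy, if_pos (Fin.ext hy.symm)]
  · rw [if_neg hy, if_neg (fun h : x = y => hy (congrArg Fin.val h).symm)]


lemma succ_block_le {i j : ℕ} (hj : j < t) : i * t + j + 1 ≤ (i + 1) * t := by
  have h : (i + 1) * t = i * t + t := by ring
  omega

lemma sum_le_m (hm : m = ∑ i ∈ Finset.range t, mbar i) {i : ℕ} (hi : i ≤ t) :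
    ∑ k ∈ Finset.range i, mbar k ≤ m := by
  rw [hm]
  exact Finset.sum_le_sum_of_subset (Finset.range_subset_range.mpr hi)

lemma card_block (hA : memI t mbar A) (hm : m = ∑ i ∈ Finset.range t, mbar i)
    {i j : ℕ} (hi : i < t) (hj : j < t) :
    A i j = (Finset.filter (fun x => (∑ k ∈ Finset.range j, mbar k) ≤ mateI t A x ∧
        mateI t A x < ∑ k ∈ Finset.range (j + 1), mbar k)
      (Finset.Ico (∑ k ∈ Finset.range i, mbar k)
        (∑ k ∈ Finset.range (i + 1), mbar k))).card := by
  have hrowi : offI t A (i * t) = ∑ k ∈ Finset.range i, mbar k := offI_row hA (le_of_lt hi)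
  have hrowi1 : offI t A ((i + 1) * t) = ∑ k ∈ Finset.range (i + 1), mbar k := offI_row hA hi
  have hrowj : offI t A (j * t) = ∑ k ∈ Finset.range j, mbar k := offI_row hA (le_of_lt hj)
  have hrowj1 : offI t A ((j + 1) * t) = ∑ k ∈ Finset.range (j + 1), mbar k := offI_row hA hj
  have hset : (Finset.filter (fun x => (∑ k ∈ Finset.range j, mbar k) ≤ mateI t A x ∧
        mateI t A x < ∑ k ∈ Finset.range (j + 1), mbar k)
      (Finset.Ico (∑ k ∈ Finset.range i, mbar k)
        (∑ k ∈ Finset.range (i + 1), mbar k))) =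
      Finset.Ico (offI t A (i * t + j)) (offI t A (i * t + j + 1)) := by
    ext x
    simp only [Finset.mem_filter, Finset.mem_Ico]
    constructor
    · rintro ⟨⟨hx1, hx2⟩, hm1, hm2⟩
      rw [← hrowi] at hx1
      rw [← hrowi1] at hx2
      rw [← hrowj] at hm1
      rw [← hrowj1] at hm2
      have hxm : x < m := by
        have h1 : offI t A ((i + 1) * t) ≤ offI t A (t * t) :=
          offI_mono (Nat.mul_le_mul_right t hi)
        have h2 := offI_tt hA hm
        omega
      obtain ⟨i', j', k, hi', hj', hk, hxe⟩ := block_ex hA hm hxm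
      have hk' : k < A j' i' := by rw [hA.1 j' i']; exact hk
      have hxlow : offI t A (i' * t) ≤ x := by
        rw [hxe]
        exact le_trans (offI_mono (Nat.le_add_right _ _)) (Nat.le_add_right _ _)
      have hxhigh : x < offI t A ((i' + 1) * t) := by
        rw [hxe]
        calc offI t A (i' * t + j') + k < offI t A (i' * t + j' + 1) := by
              rw [offI_succ, div_block hj', mod_block hj']; omega
          _ ≤ offI t A ((i' + 1) * t) := offI_mono (succ_block_le hj')
      have hmx : mateI t A x = offI t A (j' * t + i') + k := by
        rw [hxe]; exact mateI_block hi' hj' hk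
      have hmlow : offI t A (j' * t) ≤ mateI t A x := by
        rw [hmx]
        exact le_trans (offI_mono (Nat.le_add_right _ _)) (Nat.le_add_right _ _)
      have hmhigh : mateI t A x < offI t A ((j' + 1) * t) := by
        rw [hmx]
        calc offI t A (j' * t + i') + k < offI t A (j' * t + i' + 1) := by
              rw [offI_succ, div_block hi', mod_block hi']; omega
          _ ≤ offI t A ((j' + 1) * t) := offI_mono (succ_block_le hi')
      have hii : i' = i := by
        rcases Nat.lt_trichotomy i' i with h | h | h
        · exfalso
          have := offI_mono (t := t) (A := A) (Nat.mul_le_mul_right t h : (i' + 1) * t ≤ i * t)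
          omega
        · exact h
        · exfalso
          have := offI_mono (t := t) (A := A) (Nat.mul_le_mul_right t h : (i + 1) * t ≤ i' * t)
          omega
      have hjj : j' = j := by
        rcases Nat.lt_trichotomy j' j with h | h | h
        · exfalso
          have := offI_mono (t := t) (A := A) (Nat.mul_le_mul_right t h : (j' + 1) * t ≤ j * t)
          omega
        · exact h
        · exfalso
          have := offI_mono (t := t) (A := A) (Nat.mul_le_mul_right t h : (j + 1) * t ≤ j' * t)
          omega
      subst hii; subst hjj
      constructor
      · rw [hxe]; exact Nat.le_add_right _ _
      · rw [hxe, offI_succ, div_block hj, mod_block hj]; omega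
    · rintro ⟨hx1, hx2⟩
      have hks : x = offI t A (i * t + j) + (x - offI t A (i * t + j)) := by omega
      have hkk : x - offI t A (i * t + j) < A i j := by
        rw [offI_succ, div_block hj, mod_block hj] at hx2; omega
      have hmx : mateI t A x = offI t A (j * t + i) + (x - offI t A (i * t + j)) := by
        have h := mateI_block hi hj hkk
        rw [← hks] at h
        exact h
      have hkk' : x - offI t A (i * t + j) < A j i := by rw [hA.1 j i]; exact hkk
      refine ⟨⟨?_, ?_⟩, ?_, ?_⟩
      · rw [← hrowi]
        exact le_trans (offI_mono (Nat.le_add_right _ _)) hx1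
      · rw [← hrowi1]
        exact lt_of_lt_of_le hx2 (offI_mono (succ_block_le hj))
      · rw [← hrowj, hmx]
        exact le_trans (offI_mono (Nat.le_add_right _ _)) (Nat.le_add_right _ _)
      · rw [← hrowj1, hmx]
        calc offI t A (j * t + i) + (x - offI t A (i * t + j)) <
              offI t A (j * t + i + 1) := by
              rw [offI_succ, div_block hi, mod_block hi]; omega
          _ ≤ offI t A ((j + 1) * t) := offI_mono (succ_block_le hi)
  rw [hset, Nat.card_Ico, offI_succ, div_block hj, mod_block hj]
  omega


end Stmt7Aux

/-- `E/F` a quadratic field extension, `char F ≠ 2`, `θ` the nontrivial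
`F`-automorphism of `E`, `δ ∈ E∖F` with `δ² ∈ F` (so `θ δ = −δ`).  For every `a ∈ I(m̄)`:
the matrix `u_a` is invertible; `w_a = u_a·θ(u_a)⁻¹` is the permutation matrix of the
permutation `σ_a` of `{1,…,m}` fixing each `I_{i,i}` pointwise and mapping `I_{i,j}`
order-preservingly onto `I_{j,i}`; `σ_a` is an involution (in particular `w_a² = Id`);
and `a ↦ w_a` is injective on `I(m̄)`. -/
theorem stmt_7 (F E : Type*) [Field F] [Field E] [Algebra F E]
    (hchar : (2 : F) ≠ 0) (hrank : Module.finrank F E = 2)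
    (θ : E ≃ₐ[F] E) (hθ : θ ≠ AlgEquiv.refl)
    (δ : E) (hδ : δ ∉ Set.range (algebraMap F E))
    (hδsq : δ ^ 2 ∈ Set.range (algebraMap F E)) (hθδ : θ δ = -δ)
    (t : ℕ) (mbar : ℕ → ℕ) (hmbar : ∀ i, i < t → 0 < mbar i)
    (m : ℕ) (hm : m = ∑ i ∈ Finset.range t, mbar i)
    (A : ℕ → ℕ → ℕ) (hA : memI t mbar A) :
    IsUnit (uMat t m A δ) ∧
    (∀ x : Fin m, mateI t A (x : ℕ) < m) ∧
    (∀ x : Fin m, mateI t A (mateI t A (x : ℕ)) = (x : ℕ)) ∧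
    uMat t m A δ * ((uMat t m A δ).map ⇑θ)⁻¹ = wMat t m A E ∧
    wMat t m A E * wMat t m A E = 1 ∧
    (∀ A' : ℕ → ℕ → ℕ, memI t mbar A' → wMat t m A E = wMat t m A' E → A = A') := by
  classical
  have h2E : (2 : E) ≠ 0 := by
    rw [show (2 : E) = algebraMap F E 2 from (map_ofNat _ 2).symm]
    exact (map_ne_zero _).mpr hchar
  have hδ0 : δ ≠ 0 := fun h => hδ ⟨0, by rw [map_zero, h]⟩
  have hmapθ : (uMat t m A δ).map ⇑θ = uMat t m A (-δ) := by
    ext x y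
    simp only [uMat, Matrix.map_apply, Matrix.of_apply, apply_ite ⇑θ, map_one, map_zero,
      map_neg, hθδ, neg_neg]
  have hu : uMat t m A δ * Stmt7Aux.vMat t m A δ = 1 :=
    Stmt7Aux.uMat_mul_vMat hA hm h2E hδ0
  have hθu : uMat t m A (-δ) * Stmt7Aux.vMat t m A (-δ) = 1 :=
    Stmt7Aux.uMat_mul_vMat hA hm h2E (neg_ne_zero.mpr hδ0)
  refine ⟨?_, fun x => Stmt7Aux.mate_lt hA hm x.isLt,
    fun x => Stmt7Aux.mate_mate hA hm x.isLt, ?_, Stmt7Aux.wMat_mul_wMat hA hm E, ?_⟩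
  · letI := invertibleOfRightInverse _ _ hu
    exact isUnit_of_invertible _
  · have hinv : ((uMat t m A δ).map ⇑θ)⁻¹ = Stmt7Aux.vMat t m A (-δ) := by
      rw [hmapθ]; exact Matrix.inv_eq_right_inv hθu
    have hwu : wMat t m A E * uMat t m A (-δ) = uMat t m A δ := by
      have h := Stmt7Aux.wMat_mul_uMat hA hm (R := E) (-δ)
      rwa [neg_neg] at h
    rw [hinv]
    calc uMat t m A δ * Stmt7Aux.vMat t m A (-δ)
        = (wMat t m A E * uMat t m A (-δ)) * Stmt7Aux.vMat t m A (-δ) := by rw [hwu]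
      _ = wMat t m A E * (uMat t m A (-δ) * Stmt7Aux.vMat t m A (-δ)) := by
          rw [mul_assoc]
      _ = wMat t m A E := by rw [hθu, mul_one]
  · intro A' hA' hw
    have hmate : ∀ x : ℕ, x < m → mateI t A x = mateI t A' x := by
      intro x hx
      have hy0 : mateI t A x < m := Stmt7Aux.mate_lt hA hm hx
      obtain ⟨x0, hx0⟩ : ∃ x0 : Fin m, (x0 : ℕ) = x := ⟨⟨x, hx⟩, rfl⟩
      obtain ⟨y0, hy0v⟩ : ∃ y0 : Fin m, (y0 : ℕ) = mateI t A x := ⟨⟨_, hy0⟩, rfl⟩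
      have h := congrFun (congrFun hw x0) y0
      by_contra hne
      simp [wMat, Matrix.of_apply, hx0, hy0v, hne] at h
    funext i j
    by_cases hi : i < t
    · by_cases hj : j < t
      · rw [Stmt7Aux.card_block hA hm hi hj, Stmt7Aux.card_block hA' hm hi hj]
        congr 1
        apply Finset.filter_congr
        intro x hx
        have hxm : x < m := by
          have h1 := (Finset.mem_Ico.mp hx).2
          have h2 : ∑ k ∈ Finset.range (i + 1), mbar k ≤ m := Stmt7Aux.sum_le_m hm hi
          omega
        rw [hmate x hxm]
      · rw [hA.2.1 i j (Or.inr (le_of_not_gt hj)), hA'.2.1 i j (Or.inr (le_of_not_gt hj))]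
    · rw [hA.2.1 i j (Or.inl (le_of_not_gt hi)), hA'.2.1 i j (Or.inl (le_of_not_gt hi))]
end

section
/- For a ∈ I(m̄), set w_a = u_a·θ(u_a)^{-1} ∈ G and define θ_{w_a} : G → G by θ_{w_a}(g) = w_a·θ(g)·w_a^{-1}. Then the fixed-point group of θ_{w_a} in G equals u_a·H·u_a^{-1}. Moreover, for every block-diagonal element m = diag(g_{1,1}, g_{1,2}, …, g_{t,t−1}, g_{t,t}) of G, whose blocks g_{i,j} are square of size m_{i,j} and are placed on the intervals I_{i,j} in row-major order, one has θ_{w_a}(m) = diag(g'_{1,1}, g'_{1,2}, …, g'_{t,t}) where g'_{i,j} = θ(g_{j,i}). -/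
open scoped TensorProduct

/-- Membership in `H = G^θ` : the entrywise application of `Θ` fixes the matrix. -/
def HmemDef (m : ℕ) {R : Type*} [Ring R] (Θ : R → R)
    (h : (Matrix (Fin m) (Fin m) R)ˣ) : Prop :=
  (Units.val h).map Θ = Units.val h

section SumAux

variable {m : ℕ} {R : Type*} [Ring R]

private lemma sum_one_aux (a : Fin m) (c : R) (f : Fin m → R) :
    ∑ z : Fin m, (if z = a then c else 0) * f z = c * f a := by
  rw [Finset.sum_eq_single a]
  · rw [if_pos rfl]
  · intro b _ hb; rw [if_neg hb, zero_mul]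
  · intro h; exact absurd (Finset.mem_univ a) h

private lemma sum_oneR_aux (a : Fin m) (c : R) (f : Fin m → R) :
    ∑ z : Fin m, f z * (if z = a then c else 0) = f a * c := by
  rw [Finset.sum_eq_single a]
  · rw [if_pos rfl]
  · intro b _ hb; rw [if_neg hb, mul_zero]
  · intro h; exact absurd (Finset.mem_univ a) h

private lemma sum_two_aux (a b : Fin m) (hab : a ≠ b) (c d : R) (f : Fin m → R) :
    ∑ z : Fin m, (if z = a then c else if z = b then d else 0) * f z
      = c * f a + d * f b := by
  have h : ∀ z : Fin m, (if z = a then c else if z = b then d else 0) * f z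
      = (if z = a then c * f z else 0) + (if z = b then d * f z else 0) := by
    intro z
    by_cases h1 : z = a
    · subst h1; simp [hab]
    · by_cases h2 : z = b
      · subst h2; simp [h1]
      · simp [h1, h2]
  rw [Finset.sum_congr rfl fun z _ => h z, Finset.sum_add_distrib]
  simp [Finset.sum_ite_eq']

end SumAux

section NatAux

variable {t : ℕ} {mbar : ℕ → ℕ} {A : ℕ → ℕ → ℕ} {m : ℕ}

private lemma offI_mono (t : ℕ) (A : ℕ → ℕ → ℕ) : Monotone (offI t A) := fun _ _ h =>
  Finset.sum_le_sum_of_subset (Finset.range_subset_range.2 h)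

private lemma offI_succ (t : ℕ) (A : ℕ → ℕ → ℕ) (n : ℕ) :
    offI t A (n + 1) = offI t A n + A (n / t) (n % t) :=
  Finset.sum_range_succ _ n

private lemma offI_total (hA : memI t mbar A) (hm : m = ∑ i ∈ Finset.range t, mbar i) :
    offI t A (t * t) = m := by
  rcases Nat.eq_zero_or_pos t with ht | ht
  · subst ht; simp [offI, hm]
  have key : offI t A (t * t) = ∑ p ∈ Finset.range t ×ˢ Finset.range t, A p.1 p.2 := by
    unfold offI
    refine Finset.sum_nbij' (fun k => (k / t, k % t)) (fun p => p.1 * t + p.2) ?_ ?_ ?_ ?_ ?_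
    · intro k hk
      simp only [Finset.mem_range] at hk
      simp only [Finset.mem_product, Finset.mem_range]
      exact ⟨Nat.div_lt_iff_lt_mul ht |>.2 hk, Nat.mod_lt _ ht⟩
    · intro p hp
      simp only [Finset.mem_product, Finset.mem_range] at hp
      simp only [Finset.mem_range]
      calc p.1 * t + p.2 < p.1 * t + t := by omega
        _ = (p.1 + 1) * t := by ring
        _ ≤ t * t := Nat.mul_le_mul_right t hp.1
    · intro k hk
      show k / t * t + k % t = k
      rw [Nat.mul_comm]
      exact Nat.div_add_mod k t
    · intro p hp
      simp only [Finset.mem_product, Finset.mem_range] at hp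
      have h1 : (p.1 * t + p.2) / t = p.1 := by
        rw [add_comm, Nat.add_mul_div_right _ _ ht, Nat.div_eq_of_lt hp.2, Nat.zero_add]
      have h2 : (p.1 * t + p.2) % t = p.2 := by
        rw [add_comm, Nat.add_mul_mod_self_right, Nat.mod_eq_of_lt hp.2]
      simp [h1, h2]
    · intro k hk; rfl
  rw [key, Finset.sum_product, hm]
  exact Finset.sum_congr rfl fun i hi => hA.2.2 i (Finset.mem_range.1 hi)

private lemma offI_blockOfI_le (t : ℕ) (A : ℕ → ℕ → ℕ) (x : ℕ) :
    offI t A (blockOfI t A x) ≤ x :=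
  Nat.findGreatest_spec (P := fun n => offI t A n ≤ x) (Nat.zero_le _)
    (by simp [offI])

private lemma blockOfI_lt (hA : memI t mbar A) (hm : m = ∑ i ∈ Finset.range t, mbar i)
    {x : ℕ} (hx : x < m) : blockOfI t A x < t * t := by
  rcases Nat.lt_or_ge (blockOfI t A x) (t * t) with h | h
  · exact h
  · exfalso
    have h1 : blockOfI t A x ≤ t * t := Nat.findGreatest_le _
    have h2 : blockOfI t A x = t * t := le_antisymm h1 h
    have := offI_blockOfI_le t A x
    rw [h2, offI_total hA hm] at this
    omega

private lemma lt_offI_blockOfI_succ (hA : memI t mbar A)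
    (hm : m = ∑ i ∈ Finset.range t, mbar i) {x : ℕ} (hx : x < m) :
    x < offI t A (blockOfI t A x + 1) := by
  by_contra h
  push_neg at h
  exact Nat.findGreatest_is_greatest (P := fun n => offI t A n ≤ x)
    (Nat.lt_succ_self _) (blockOfI_lt hA hm hx) h

private lemma blockOfI_eq {n y : ℕ} (hn : n < t * t) (h1 : offI t A n ≤ y)
    (h2 : y < offI t A (n + 1)) : blockOfI t A y = n := by
  have hle : n ≤ blockOfI t A y :=
    Nat.le_findGreatest (Nat.le_of_lt hn) h1
  rcases Nat.lt_or_ge n (blockOfI t A y) with h | h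
  · exfalso
    have := offI_blockOfI_le t A y
    have hmono := offI_mono t A (show n + 1 ≤ blockOfI t A y from h)
    omega
  · omega

/-- The master lemma about mates. -/
private lemma mate_main (hA : memI t mbar A) (hm : m = ∑ i ∈ Finset.range t, mbar i)
    {x : ℕ} (hx : x < m) :
    mateI t A x < m ∧ mateI t A (mateI t A x) = x ∧
      blockOfI t A (mateI t A x) / t = blockOfI t A x % t ∧
      blockOfI t A (mateI t A x) % t = blockOfI t A x / t ∧
      (blockOfI t A x / t = blockOfI t A x % t → mateI t A x = x) ∧
      (blockOfI t A x / t ≠ blockOfI t A x % t → mateI t A x ≠ x) := by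
  set b := blockOfI t A x with hb
  set i := b / t with hi
  set j := b % t with hj
  have h1 : offI t A b ≤ x := offI_blockOfI_le t A x
  have h2 : b < t * t := blockOfI_lt hA hm hx
  have h3 : x < offI t A b + A i j := by
    have := lt_offI_blockOfI_succ hA hm hx
    rwa [offI_succ] at this
  have ht : 0 < t := by
    rcases Nat.eq_zero_or_pos t with h | h
    · subst h; simp at h2
    · exact h
  have hit : i < t := (Nat.div_lt_iff_lt_mul ht).2 h2
  have hjt : j < t := Nat.mod_lt _ ht
  have hb' : j * t + i < t * t := by
    calc j * t + i < j * t + t := by omega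
      _ = (j + 1) * t := by ring
      _ ≤ t * t := Nat.mul_le_mul_right t hjt
  have hb'div : (j * t + i) / t = j := by
    rw [add_comm, Nat.add_mul_div_right _ _ ht, Nat.div_eq_of_lt hit, Nat.zero_add]
  have hb'mod : (j * t + i) % t = i := by
    rw [add_comm, Nat.add_mul_mod_self_right, Nat.mod_eq_of_lt hit]
  have hbdm : i * t + j = b := by
    rw [hi, hj, Nat.mul_comm]
    exact Nat.div_add_mod b t
  have hmate : mateI t A x = offI t A (j * t + i) + (x - offI t A b) := rfl
  have hr : x - offI t A b < A j i := by
    rw [hA.1 j i]; omega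
  have hmlt' : mateI t A x < offI t A (j * t + i + 1) := by
    rw [offI_succ, hb'div, hb'mod]; omega
  have hmlt : mateI t A x < m := by
    have := offI_mono t A (show j * t + i + 1 ≤ t * t from hb')
    rw [offI_total hA hm] at this
    omega
  have hbm : blockOfI t A (mateI t A x) = j * t + i :=
    blockOfI_eq hb' (by rw [hmate]; omega) hmlt'
  have hmm : mateI t A (mateI t A x) = x := by
    show offI t A ((blockOfI t A (mateI t A x) % t) * t + blockOfI t A (mateI t A x) / t)
        + (mateI t A x - offI t A (blockOfI t A (mateI t A x))) = x
    rw [hbm, hb'div, hb'mod, hbdm, hmate]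
    omega
  refine ⟨hmlt, hmm, by rw [hbm, hb'div], by rw [hbm, hb'mod], ?_, ?_⟩
  · intro hij
    have : j * t + i = b := by rw [hij] at hbdm ⊢; exact hbdm
    rw [hmate, this]; omega
  · intro hij hcontra
    have : j * t + i ≠ b := by
      intro h
      rw [← hbdm] at h
      rcases Nat.lt_or_ge i j with hlt | hge
      · have : i * t + t ≤ j * t := by
          calc i * t + t = (i + 1) * t := by ring
            _ ≤ j * t := Nat.mul_le_mul_right t hlt
        omega
      · have hlt : j < i := by omega
        have : j * t + t ≤ i * t := by
          calc j * t + t = (j + 1) * t := by ring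
            _ ≤ i * t := Nat.mul_le_mul_right t hlt
        omega
    rw [hcontra, ← hb] at hbm
    exact this hbm.symm

end NatAux


set_option maxHeartbeats 2000000 in
/-- Setting as in the double-coset statement: `D_E = E ⊗_F D` a division ring,
`Θ = θ ⊗ id`, `G = GL_m(D_E)`, `H = G^Θ`.  For `a ∈ I(m̄)`, `u_a` is invertible (with inverse
`V`), `w_a := u_a · Θ(u_a)⁻¹ = u_a · Θ(V)` is invertible (with inverse `Wi`), the fixed-point
group of `θ_{w_a} : g ↦ w_a·Θ(g)·w_a⁻¹` in `G` equals `u_a · H · u_a⁻¹`, and for every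
block-diagonal element `g` of `G` (blocks placed on the intervals `I_{i,j}` in row-major
order) one has `θ_{w_a}(g) (x, y) = Θ (g (σ_a x, σ_a y))`, i.e. `θ_{w_a}` replaces the block
`g_{i,j}` by `θ(g_{j,i})`. -/
theorem stmt_9 (F E : Type*) [Field F] [Field E] [Algebra F E]
    (hchar : (2 : F) ≠ 0) (hrank : Module.finrank F E = 2)
    (θ : E ≃ₐ[F] E) (hθ : θ ≠ AlgEquiv.refl)
    (δ : E) (hδ : δ ∉ Set.range (algebraMap F E))
    (hδsq : δ ^ 2 ∈ Set.range (algebraMap F E)) (hθδ : θ δ = -δ)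
    (D : Type*) [DivisionRing D] [Algebra F D]
    (hcentral : Subalgebra.center F D = ⊥)
    (hdiv : ∀ x : E ⊗[F] D, x ≠ 0 → IsUnit x)
    (Θ : E ⊗[F] D → E ⊗[F] D)
    (hΘ : Θ = ⇑(Algebra.TensorProduct.congr θ (AlgEquiv.refl (R := F) (A₁ := D))))
    (δ' : E ⊗[F] D) (hδ' : δ' = algebraMap E (E ⊗[F] D) δ)
    (t : ℕ) (mbar : ℕ → ℕ) (hmbar : ∀ i, i < t → 0 < mbar i)
    (m : ℕ) (hm : m = ∑ i ∈ Finset.range t, mbar i)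
    (A : ℕ → ℕ → ℕ) (hA : memI t mbar A) :
    ∃ V : Matrix (Fin m) (Fin m) (E ⊗[F] D),
      uMat t m A δ' * V = 1 ∧ V * uMat t m A δ' = 1 ∧
      ∃ Wi : Matrix (Fin m) (Fin m) (E ⊗[F] D),
        uMat t m A δ' * V.map Θ * Wi = 1 ∧ Wi * (uMat t m A δ' * V.map Θ) = 1 ∧
        (∀ g : (Matrix (Fin m) (Fin m) (E ⊗[F] D))ˣ,
          uMat t m A δ' * V.map Θ * (Units.val g).map Θ * Wi = Units.val g ↔
            ∃ h : (Matrix (Fin m) (Fin m) (E ⊗[F] D))ˣ, HmemDef m Θ h ∧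
              Units.val g = uMat t m A δ' * Units.val h * V) ∧
        (∀ g : (Matrix (Fin m) (Fin m) (E ⊗[F] D))ˣ,
          (∀ x y : Fin m, blockOfI t A (x : ℕ) ≠ blockOfI t A (y : ℕ) →
            Units.val g x y = 0) →
          ∀ x y : Fin m, ∃ (hx : mateI t A (x : ℕ) < m) (hy : mateI t A (y : ℕ) < m),
            (uMat t m A δ' * V.map Θ * (Units.val g).map Θ * Wi) x y =
              Θ (Units.val g ⟨mateI t A (x : ℕ), hx⟩ ⟨mateI t A (y : ℕ), hy⟩)) := by
  classical
  -- Θ is a ring homomorphism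
  have hΘmul : ∀ a b : E ⊗[F] D, Θ (a * b) = Θ a * Θ b := by
    subst hΘ; exact map_mul _
  have hΘadd : ∀ a b : E ⊗[F] D, Θ (a + b) = Θ a + Θ b := by
    subst hΘ; exact map_add _
  have hΘone : Θ 1 = 1 := by subst hΘ; exact map_one _
  let ΘR : (E ⊗[F] D) →+* (E ⊗[F] D) := RingHom.mk' ⟨⟨Θ, hΘone⟩, hΘmul⟩ hΘadd
  have hΘzero : Θ 0 = 0 := map_zero ΘR
  have hΘneg : ∀ a : E ⊗[F] D, Θ (-a) = -Θ a := fun a => map_neg ΘR a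
  have hΘ2 : Θ (2 : E ⊗[F] D) = 2 := map_ofNat ΘR 2
  haveI hnt : Nontrivial (E ⊗[F] D) := Module.FaithfullyFlat.lTensor_nontrivial F E D
  have hinj : Function.Injective (algebraMap E (E ⊗[F] D)) := RingHom.injective _
  have hδ0 : δ ≠ 0 := fun h => hδ ⟨0, by rw [map_zero, h]⟩
  have h2E : (2 : E) ≠ 0 := fun h =>
    hchar ((algebraMap F E).injective (by rw [map_ofNat, h, map_zero]))
  have h2δ : (2 : E) * δ ≠ 0 := mul_ne_zero h2E hδ0
  have h2R : (2 : E ⊗[F] D) = algebraMap E (E ⊗[F] D) 2 := (map_ofNat _ 2).symm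
  have h2δ'' : (2 : E ⊗[F] D) * δ' = algebraMap E (E ⊗[F] D) ((2 : E) * δ) := by
    rw [map_mul, hδ', h2R]
  have hu2 : IsUnit (2 : E ⊗[F] D) :=
    hdiv _ (by rw [h2R]; exact fun h => h2E (hinj (by rw [h, map_zero])))
  have hu2δ : IsUnit ((2 : E ⊗[F] D) * δ') :=
    hdiv _ (by rw [h2δ'']; exact fun h => h2δ (hinj (by rw [h, map_zero])))
  set half := Ring.inverse (2 : E ⊗[F] D) with hhalfdef
  set din := Ring.inverse ((2 : E ⊗[F] D) * δ') with hdindef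
  have h2half : (2 : E ⊗[F] D) * half = 1 := Ring.mul_inverse_cancel _ hu2
  have hhalf2 : half * 2 = 1 := Ring.inverse_mul_cancel _ hu2
  have hdd : ((2 : E ⊗[F] D) * δ') * din = 1 := Ring.mul_inverse_cancel _ hu2δ
  have hdd' : din * ((2 : E ⊗[F] D) * δ') = 1 := Ring.inverse_mul_cancel _ hu2δ
  have hcomm : ∀ r : E ⊗[F] D, δ' * r = r * δ' := fun r => by
    rw [hδ']; exact Algebra.commutes δ r
  have hδdin : δ' * din = half := by
    have h1 : (2 : E ⊗[F] D) * (δ' * din) = 1 := by rw [← mul_assoc]; exact hdd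
    calc δ' * din = (half * 2) * (δ' * din) := by rw [hhalf2, one_mul]
      _ = half * ((2 : E ⊗[F] D) * (δ' * din)) := mul_assoc half 2 (δ' * din)
      _ = half := by rw [h1, mul_one]
  have hdinδ : din * δ' = half := by
    have h1 : (din * δ') * 2 = 1 := by rw [mul_assoc, hcomm 2]; exact hdd'
    calc din * δ' = (din * δ') * (2 * half) := by rw [h2half, mul_one]
      _ = ((din * δ') * 2) * half := (mul_assoc (din * δ') 2 half).symm
      _ = half := by rw [h1, one_mul]
  have hhalfhalf : half + half = 1 := by
    calc half + half = 2 * half := (two_mul half).symm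
      _ = 1 := h2half
  have hΘδ' : Θ δ' = -δ' := by
    rw [hΘ, hδ', Algebra.TensorProduct.algebraMap_apply]
    simp [Algebra.TensorProduct.congr_apply, Algebra.TensorProduct.map_tmul, hθδ,
      TensorProduct.neg_tmul, Algebra.TensorProduct.algebraMap_apply]
  have hΘhalf : Θ half = half := by
    have h1 : Θ half * 2 = 1 := by rw [← hΘ2, ← hΘmul, hhalf2, hΘone]
    calc Θ half = Θ half * (2 * half) := by rw [h2half, mul_one]
      _ = (Θ half * 2) * half := (mul_assoc (Θ half) 2 half).symm
      _ = half := by rw [h1, one_mul]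
  have hΘdin : Θ din = -din := by
    have h1 : Θ din * ((2 : E ⊗[F] D) * δ') = -1 := by
      have h0 : Θ din * Θ ((2 : E ⊗[F] D) * δ') = 1 := by rw [← hΘmul, hdd', hΘone]
      rw [hΘmul, hΘ2, hΘδ', mul_neg, mul_neg] at h0
      exact neg_eq_iff_eq_neg.1 h0
    calc Θ din = (Θ din * ((2 : E ⊗[F] D) * δ')) * din := by rw [mul_assoc, hdd, mul_one]
      _ = (-1) * din := by rw [h1]
      _ = -din := by rw [neg_one_mul]
  -- the candidate inverse of u and the permutation matrix of the mate involution
  set Vm : Matrix (Fin m) (Fin m) (E ⊗[F] D) := Matrix.of fun x y =>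
    if blockOfI t A (x : ℕ) / t ≤ blockOfI t A (x : ℕ) % t then
      if blockOfI t A (x : ℕ) / t = blockOfI t A (x : ℕ) % t then
        (if (y : ℕ) = (x : ℕ) then 1 else 0)
      else (if (y : ℕ) = (x : ℕ) then half else if (y : ℕ) = mateI t A (x : ℕ) then half else 0)
    else (if (y : ℕ) = (x : ℕ) then din else if (y : ℕ) = mateI t A (x : ℕ) then -din else 0)
    with hVmdef
  set Pm : Matrix (Fin m) (Fin m) (E ⊗[F] D) := Matrix.of fun x y =>
    if (y : ℕ) = mateI t A (x : ℕ) then 1 else 0 with hPmdef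
  -- row descriptions
  have uRowU : ∀ x mx : Fin m, (mx : ℕ) = mateI t A (x : ℕ) →
      blockOfI t A (x : ℕ) / t ≤ blockOfI t A (x : ℕ) % t →
      ∀ z : Fin m, uMat t m A δ' x z = if z = x then 1 else if z = mx then -δ' else 0 := by
    intro x mx hmx hc z
    simp only [uMat, Matrix.of_apply]
    rw [if_pos hc, ← hmx]
    simp only [Fin.val_eq_val]
  have uRowL : ∀ x mx : Fin m, (mx : ℕ) = mateI t A (x : ℕ) →
      blockOfI t A (x : ℕ) % t < blockOfI t A (x : ℕ) / t →
      ∀ z : Fin m, uMat t m A δ' x z = if z = mx then 1 else if z = x then δ' else 0 := by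
    intro x mx hmx hc z
    simp only [uMat, Matrix.of_apply]
    rw [if_neg (not_le.mpr hc), ← hmx]
    simp only [Fin.val_eq_val]
  have vRowD : ∀ x : Fin m, blockOfI t A (x : ℕ) / t = blockOfI t A (x : ℕ) % t →
      ∀ z : Fin m, Vm x z = if z = x then 1 else 0 := by
    intro x hc z
    rw [hVmdef]
    simp only [Matrix.of_apply]
    rw [if_pos (le_of_eq hc), if_pos hc]
    simp only [Fin.val_eq_val]
  have vRowU : ∀ x mx : Fin m, (mx : ℕ) = mateI t A (x : ℕ) →
      blockOfI t A (x : ℕ) / t < blockOfI t A (x : ℕ) % t →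
      ∀ z : Fin m, Vm x z = if z = x then half else if z = mx then half else 0 := by
    intro x mx hmx hc z
    rw [hVmdef]
    simp only [Matrix.of_apply]
    rw [if_pos (le_of_lt hc), if_neg (ne_of_lt hc), ← hmx]
    simp only [Fin.val_eq_val]
  have vRowL : ∀ x mx : Fin m, (mx : ℕ) = mateI t A (x : ℕ) →
      blockOfI t A (x : ℕ) % t < blockOfI t A (x : ℕ) / t →
      ∀ z : Fin m, Vm x z = if z = x then din else if z = mx then -din else 0 := by
    intro x mx hmx hc z
    rw [hVmdef]
    simp only [Matrix.of_apply]
    rw [if_neg (not_le.mpr hc), ← hmx]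
    simp only [Fin.val_eq_val]
  have pRow : ∀ x mx : Fin m, (mx : ℕ) = mateI t A (x : ℕ) →
      ∀ z : Fin m, Pm x z = if z = mx then 1 else 0 := by
    intro x mx hmx z
    rw [hPmdef]
    simp only [Matrix.of_apply]
    rw [← hmx]
    simp only [Fin.val_eq_val]
  -- u * V = 1
  have hu : uMat t m A δ' * Vm = 1 := by
    ext x y
    rw [Matrix.mul_apply, Matrix.one_apply]
    obtain ⟨hmlt, hmm, hdivm, hmodm, hdiag, hneq⟩ := mate_main hA hm x.isLt
    rcases lt_trichotomy (blockOfI t A (x : ℕ) / t) (blockOfI t A (x : ℕ) % t)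
      with hij | hij | hij
    · set mx : Fin m := ⟨mateI t A (x : ℕ), hmlt⟩ with hmxdef
      have hmxv : (mx : ℕ) = mateI t A (x : ℕ) := rfl
      have hxm : x ≠ mx := fun h => hneq (ne_of_lt hij) (congrArg Fin.val h).symm
      have hmxx : mx ≠ x := fun h => hxm h.symm
      have hd1 : blockOfI t A (mx : ℕ) / t = blockOfI t A (x : ℕ) % t := hdivm
      have hd2 : blockOfI t A (mx : ℕ) % t = blockOfI t A (x : ℕ) / t := hmodm
      have hmxlt : blockOfI t A (mx : ℕ) % t < blockOfI t A (mx : ℕ) / t := by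
        rw [hd1, hd2]; exact hij
      have hxmm : (x : ℕ) = mateI t A (mx : ℕ) := hmm.symm
      have hsum1 : ∑ z : Fin m, uMat t m A δ' x z * Vm z y
          = ∑ z : Fin m, (if z = x then 1 else if z = mx then -δ' else 0) * Vm z y :=
        Finset.sum_congr rfl fun z _ => by rw [uRowU x mx hmxv (le_of_lt hij) z]
      have hsum2 : ∑ z : Fin m, (if z = x then 1 else if z = mx then -δ' else 0) * Vm z y
          = 1 * Vm x y + (-δ') * Vm mx y := sum_two_aux x mx hxm 1 (-δ') fun z => Vm z y
      rw [hsum1, hsum2, vRowU x mx hmxv hij y, vRowL mx x hxmm hmxlt y]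
      by_cases hyx : y = x
      · subst hyx
        rw [if_pos rfl, if_neg hxm, if_pos rfl, if_pos rfl, one_mul, neg_mul_neg, hδdin]
        exact hhalfhalf
      · by_cases hymx : y = mx
        · subst hymx
          rw [if_neg hmxx, if_pos rfl, if_pos rfl, if_neg hxm, one_mul, neg_mul, hδdin]
          exact add_neg_cancel half
        · rw [if_neg hyx, if_neg hymx, if_neg hymx, if_neg hyx,
            if_neg (fun h => hyx h.symm)]
          simp
    · have hmx0 : mateI t A (x : ℕ) = (x : ℕ) := hdiag hij
      have hsum1 : ∑ z : Fin m, uMat t m A δ' x z * Vm z y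
          = ∑ z : Fin m, (if z = x then 1 else 0) * Vm z y :=
        Finset.sum_congr rfl fun z _ => by
          rw [uRowU x x hmx0.symm (le_of_eq hij) z]
          by_cases hzx : z = x
          · rw [if_pos hzx, if_pos hzx]
          · rw [if_neg hzx, if_neg hzx, if_neg hzx]
      have hsum2 : ∑ z : Fin m, (if z = x then 1 else 0) * Vm z y = 1 * Vm x y :=
        sum_one_aux x 1 fun z => Vm z y
      rw [hsum1, hsum2, one_mul, vRowD x hij y]
      by_cases hyx : y = x
      · subst hyx; simp
      · rw [if_neg hyx, if_neg (fun h => hyx h.symm)]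
    · set mx : Fin m := ⟨mateI t A (x : ℕ), hmlt⟩ with hmxdef
      have hmxv : (mx : ℕ) = mateI t A (x : ℕ) := rfl
      have hxm : x ≠ mx := fun h =>
        hneq (ne_of_lt hij).symm (congrArg Fin.val h).symm
      have hmxx : mx ≠ x := fun h => hxm h.symm
      have hd1 : blockOfI t A (mx : ℕ) / t = blockOfI t A (x : ℕ) % t := hdivm
      have hd2 : blockOfI t A (mx : ℕ) % t = blockOfI t A (x : ℕ) / t := hmodm
      have hmxlt : blockOfI t A (mx : ℕ) / t < blockOfI t A (mx : ℕ) % t := by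
        rw [hd1, hd2]; exact hij
      have hxmm : (x : ℕ) = mateI t A (mx : ℕ) := hmm.symm
      have hsum1 : ∑ z : Fin m, uMat t m A δ' x z * Vm z y
          = ∑ z : Fin m, (if z = mx then 1 else if z = x then δ' else 0) * Vm z y :=
        Finset.sum_congr rfl fun z _ => by rw [uRowL x mx hmxv hij z]
      have hsum2 : ∑ z : Fin m, (if z = mx then 1 else if z = x then δ' else 0) * Vm z y
          = 1 * Vm mx y + δ' * Vm x y := sum_two_aux mx x hmxx 1 δ' fun z => Vm z y
      rw [hsum1, hsum2, vRowU mx x hxmm hmxlt y, vRowL x mx hmxv hij y]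
      by_cases hyx : y = x
      · subst hyx
        rw [if_neg hxm, if_pos rfl, if_pos rfl, if_pos rfl, one_mul, hδdin]
        exact hhalfhalf
      · by_cases hymx : y = mx
        · subst hymx
          rw [if_pos rfl, if_neg hmxx, if_pos rfl, if_neg hxm,
            one_mul, mul_neg, hδdin]
          exact add_neg_cancel half
        · rw [if_neg hymx, if_neg hyx, if_neg hyx, if_neg hymx,
            if_neg (fun h => hyx h.symm)]
          simp
  -- V * u = 1
  have hVu : Vm * uMat t m A δ' = 1 := by
    ext x y
    rw [Matrix.mul_apply, Matrix.one_apply]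
    obtain ⟨hmlt, hmm, hdivm, hmodm, hdiag, hneq⟩ := mate_main hA hm x.isLt
    rcases lt_trichotomy (blockOfI t A (x : ℕ) / t) (blockOfI t A (x : ℕ) % t)
      with hij | hij | hij
    · set mx : Fin m := ⟨mateI t A (x : ℕ), hmlt⟩ with hmxdef
      have hmxv : (mx : ℕ) = mateI t A (x : ℕ) := rfl
      have hxm : x ≠ mx := fun h => hneq (ne_of_lt hij) (congrArg Fin.val h).symm
      have hmxx : mx ≠ x := fun h => hxm h.symm
      have hd1 : blockOfI t A (mx : ℕ) / t = blockOfI t A (x : ℕ) % t := hdivm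
      have hd2 : blockOfI t A (mx : ℕ) % t = blockOfI t A (x : ℕ) / t := hmodm
      have hmxlt : blockOfI t A (mx : ℕ) % t < blockOfI t A (mx : ℕ) / t := by
        rw [hd1, hd2]; exact hij
      have hxmm : (x : ℕ) = mateI t A (mx : ℕ) := hmm.symm
      have hsum1 : ∑ z : Fin m, Vm x z * uMat t m A δ' z y
          = ∑ z : Fin m, (if z = x then half else if z = mx then half else 0)
              * uMat t m A δ' z y :=
        Finset.sum_congr rfl fun z _ => by rw [vRowU x mx hmxv hij z]
      have hsum2 : ∑ z : Fin m, (if z = x then half else if z = mx then half else 0)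
            * uMat t m A δ' z y
          = half * uMat t m A δ' x y + half * uMat t m A δ' mx y :=
        sum_two_aux x mx hxm half half fun z => uMat t m A δ' z y
      rw [hsum1, hsum2, uRowU x mx hmxv (le_of_lt hij) y, uRowL mx x hxmm hmxlt y]
      by_cases hyx : y = x
      · subst hyx
        rw [if_pos rfl, if_pos rfl, if_pos rfl, mul_one]
        exact hhalfhalf
      · by_cases hymx : y = mx
        · subst hymx
          rw [if_neg hmxx, if_pos rfl, if_neg hmxx, if_pos rfl, if_neg hxm, mul_neg]
          exact neg_add_cancel (half * δ')
        · rw [if_neg hyx, if_neg hymx, if_neg hyx, if_neg hymx,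
            if_neg (fun h => hyx h.symm)]
          simp
    · have hmx0 : mateI t A (x : ℕ) = (x : ℕ) := hdiag hij
      have hsum1 : ∑ z : Fin m, Vm x z * uMat t m A δ' z y
          = ∑ z : Fin m, (if z = x then 1 else 0) * uMat t m A δ' z y :=
        Finset.sum_congr rfl fun z _ => by rw [vRowD x hij z]
      have hsum2 : ∑ z : Fin m, (if z = x then 1 else 0) * uMat t m A δ' z y
          = 1 * uMat t m A δ' x y := sum_one_aux x 1 fun z => uMat t m A δ' z y
      rw [hsum1, hsum2, one_mul, uRowU x x hmx0.symm (le_of_eq hij) y]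
      by_cases hyx : y = x
      · subst hyx; simp
      · rw [if_neg hyx, if_neg hyx, if_neg (fun h => hyx h.symm)]
    · set mx : Fin m := ⟨mateI t A (x : ℕ), hmlt⟩ with hmxdef
      have hmxv : (mx : ℕ) = mateI t A (x : ℕ) := rfl
      have hxm : x ≠ mx := fun h =>
        hneq (ne_of_lt hij).symm (congrArg Fin.val h).symm
      have hmxx : mx ≠ x := fun h => hxm h.symm
      have hd1 : blockOfI t A (mx : ℕ) / t = blockOfI t A (x : ℕ) % t := hdivm
      have hd2 : blockOfI t A (mx : ℕ) % t = blockOfI t A (x : ℕ) / t := hmodm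
      have hmxlt : blockOfI t A (mx : ℕ) / t < blockOfI t A (mx : ℕ) % t := by
        rw [hd1, hd2]; exact hij
      have hxmm : (x : ℕ) = mateI t A (mx : ℕ) := hmm.symm
      have hsum1 : ∑ z : Fin m, Vm x z * uMat t m A δ' z y
          = ∑ z : Fin m, (if z = x then din else if z = mx then -din else 0)
              * uMat t m A δ' z y :=
        Finset.sum_congr rfl fun z _ => by rw [vRowL x mx hmxv hij z]
      have hsum2 : ∑ z : Fin m, (if z = x then din else if z = mx then -din else 0)
            * uMat t m A δ' z y
          = din * uMat t m A δ' x y + (-din) * uMat t m A δ' mx y :=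
        sum_two_aux x mx hxm din (-din) fun z => uMat t m A δ' z y
      rw [hsum1, hsum2, uRowL x mx hmxv hij y, uRowU mx x hxmm (le_of_lt hmxlt) y]
      by_cases hyx : y = x
      · subst hyx
        rw [if_neg hxm, if_pos rfl, if_neg hxm, if_pos rfl, if_pos rfl,
          neg_mul_neg, hdinδ]
        exact hhalfhalf
      · by_cases hymx : y = mx
        · subst hymx
          rw [if_pos rfl, if_pos rfl, if_neg hxm, mul_one, mul_one]
          exact add_neg_cancel din
        · rw [if_neg hymx, if_neg hyx, if_neg hymx, if_neg hyx,
            if_neg (fun h => hyx h.symm)]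
          simp
  -- u * Θ(V) is the permutation matrix of the mate involution
  have hw : uMat t m A δ' * Vm.map Θ = Pm := by
    ext x y
    rw [Matrix.mul_apply]
    obtain ⟨hmlt, hmm, hdivm, hmodm, hdiag, hneq⟩ := mate_main hA hm x.isLt
    rcases lt_trichotomy (blockOfI t A (x : ℕ) / t) (blockOfI t A (x : ℕ) % t)
      with hij | hij | hij
    · set mx : Fin m := ⟨mateI t A (x : ℕ), hmlt⟩ with hmxdef
      have hmxv : (mx : ℕ) = mateI t A (x : ℕ) := rfl
      have hxm : x ≠ mx := fun h => hneq (ne_of_lt hij) (congrArg Fin.val h).symm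
      have hmxx : mx ≠ x := fun h => hxm h.symm
      have hd1 : blockOfI t A (mx : ℕ) / t = blockOfI t A (x : ℕ) % t := hdivm
      have hd2 : blockOfI t A (mx : ℕ) % t = blockOfI t A (x : ℕ) / t := hmodm
      have hmxlt : blockOfI t A (mx : ℕ) % t < blockOfI t A (mx : ℕ) / t := by
        rw [hd1, hd2]; exact hij
      have hxmm : (x : ℕ) = mateI t A (mx : ℕ) := hmm.symm
      have hsum1 : ∑ z : Fin m, uMat t m A δ' x z * Vm.map Θ z y
          = ∑ z : Fin m, (if z = x then 1 else if z = mx then -δ' else 0) * Vm.map Θ z y :=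
        Finset.sum_congr rfl fun z _ => by rw [uRowU x mx hmxv (le_of_lt hij) z]
      have hsum2 : ∑ z : Fin m, (if z = x then 1 else if z = mx then -δ' else 0)
            * Vm.map Θ z y
          = 1 * Vm.map Θ x y + (-δ') * Vm.map Θ mx y :=
        sum_two_aux x mx hxm 1 (-δ') fun z => Vm.map Θ z y
      rw [hsum1, hsum2, Matrix.map_apply, Matrix.map_apply, vRowU x mx hmxv hij y,
        vRowL mx x hxmm hmxlt y, pRow x mx hmxv y]
      by_cases hyx : y = x
      · subst hyx
        rw [if_pos rfl, if_neg hxm, if_pos rfl, if_neg hxm, hΘhalf, hΘneg, hΘdin,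
          neg_neg, one_mul, neg_mul, hδdin]
        exact add_neg_cancel half
      · by_cases hymx : y = mx
        · subst hymx
          rw [if_neg hmxx, if_pos rfl, if_pos rfl, if_pos rfl, hΘhalf, hΘdin,
            one_mul, neg_mul_neg, hδdin]
          exact hhalfhalf
        · rw [if_neg hyx, if_neg hymx, if_neg hymx, if_neg hyx, if_neg hymx, hΘzero]
          simp
    · have hmx0 : mateI t A (x : ℕ) = (x : ℕ) := hdiag hij
      have hsum1 : ∑ z : Fin m, uMat t m A δ' x z * Vm.map Θ z y
          = ∑ z : Fin m, (if z = x then 1 else 0) * Vm.map Θ z y :=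
        Finset.sum_congr rfl fun z _ => by
          rw [uRowU x x hmx0.symm (le_of_eq hij) z]
          by_cases hzx : z = x
          · rw [if_pos hzx, if_pos hzx]
          · rw [if_neg hzx, if_neg hzx, if_neg hzx]
      have hsum2 : ∑ z : Fin m, (if z = x then 1 else 0) * Vm.map Θ z y
          = 1 * Vm.map Θ x y := sum_one_aux x 1 fun z => Vm.map Θ z y
      rw [hsum1, hsum2, one_mul, Matrix.map_apply, vRowD x hij y, pRow x x hmx0.symm y]
      by_cases hyx : y = x
      · rw [if_pos hyx, hΘone]
      · rw [if_neg hyx, hΘzero]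
    · set mx : Fin m := ⟨mateI t A (x : ℕ), hmlt⟩ with hmxdef
      have hmxv : (mx : ℕ) = mateI t A (x : ℕ) := rfl
      have hxm : x ≠ mx := fun h =>
        hneq (ne_of_lt hij).symm (congrArg Fin.val h).symm
      have hmxx : mx ≠ x := fun h => hxm h.symm
      have hd1 : blockOfI t A (mx : ℕ) / t = blockOfI t A (x : ℕ) % t := hdivm
      have hd2 : blockOfI t A (mx : ℕ) % t = blockOfI t A (x : ℕ) / t := hmodm
      have hmxlt : blockOfI t A (mx : ℕ) / t < blockOfI t A (mx : ℕ) % t := by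
        rw [hd1, hd2]; exact hij
      have hxmm : (x : ℕ) = mateI t A (mx : ℕ) := hmm.symm
      have hsum1 : ∑ z : Fin m, uMat t m A δ' x z * Vm.map Θ z y
          = ∑ z : Fin m, (if z = mx then 1 else if z = x then δ' else 0) * Vm.map Θ z y :=
        Finset.sum_congr rfl fun z _ => by rw [uRowL x mx hmxv hij z]
      have hsum2 : ∑ z : Fin m, (if z = mx then 1 else if z = x then δ' else 0)
            * Vm.map Θ z y
          = 1 * Vm.map Θ mx y + δ' * Vm.map Θ x y :=
        sum_two_aux mx x hmxx 1 δ' fun z => Vm.map Θ z y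
      rw [hsum1, hsum2, Matrix.map_apply, Matrix.map_apply, vRowU mx x hxmm hmxlt y,
        vRowL x mx hmxv hij y, pRow x mx hmxv y]
      by_cases hyx : y = x
      · subst hyx
        rw [if_neg hxm, if_pos rfl, if_pos rfl, if_neg hxm, hΘhalf, hΘdin,
          one_mul, mul_neg, hδdin]
        exact add_neg_cancel half
      · by_cases hymx : y = mx
        · subst hymx
          rw [if_pos rfl, if_neg hmxx, if_pos rfl, if_pos rfl, hΘhalf, hΘneg, hΘdin,
            neg_neg, one_mul, hδdin]
          exact hhalfhalf
        · rw [if_neg hymx, if_neg hyx, if_neg hyx, if_neg hymx, if_neg hymx, hΘzero]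
          simp
  -- P * P = 1
  have hP2 : Pm * Pm = 1 := by
    ext x y
    rw [Matrix.mul_apply, Matrix.one_apply]
    obtain ⟨hmlt, hmm, _, _, _, _⟩ := mate_main hA hm x.isLt
    set mx : Fin m := ⟨mateI t A (x : ℕ), hmlt⟩ with hmxdef
    have hmxv : (mx : ℕ) = mateI t A (x : ℕ) := rfl
    have hxmm : (x : ℕ) = mateI t A (mx : ℕ) := hmm.symm
    have hsum1 : ∑ z : Fin m, Pm x z * Pm z y
        = ∑ z : Fin m, (if z = mx then 1 else 0) * Pm z y :=
      Finset.sum_congr rfl fun z _ => by rw [pRow x mx hmxv z]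
    have hsum2 : ∑ z : Fin m, (if z = mx then 1 else 0) * Pm z y = 1 * Pm mx y :=
      sum_one_aux mx 1 fun z => Pm z y
    rw [hsum1, hsum2, one_mul, pRow mx x hxmm y]
    by_cases hyx : y = x
    · rw [if_pos hyx, if_pos hyx.symm]
    · rw [if_neg hyx, if_neg (fun h => hyx h.symm)]
  -- conjugation by P takes entries to mate positions
  have hPMP : ∀ (M : Matrix (Fin m) (Fin m) (E ⊗[F] D)) (x y : Fin m)
      (hx : mateI t A (x : ℕ) < m) (hy : mateI t A (y : ℕ) < m),
      (Pm * M * Pm) x y = M ⟨mateI t A (x : ℕ), hx⟩ ⟨mateI t A (y : ℕ), hy⟩ := by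
    intro M x y hx hy
    obtain ⟨_, hmmy, _, _, _, _⟩ := mate_main hA hm y.isLt
    have hcol : ∀ z : Fin m, Pm z y
        = if z = (⟨mateI t A (y : ℕ), hy⟩ : Fin m) then 1 else 0 := by
      intro z
      obtain ⟨_, hmmz, _, _, _, _⟩ := mate_main hA hm z.isLt
      rw [hPmdef]
      simp only [Matrix.of_apply]
      by_cases h : (y : ℕ) = mateI t A (z : ℕ)
      · rw [if_pos h, if_pos (Fin.ext (show (z : ℕ) = mateI t A (y : ℕ) by rw [h, hmmz]))]
      · have hne : ¬ z = (⟨mateI t A (y : ℕ), hy⟩ : Fin m) := by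
          intro he
          apply h
          have hv : (z : ℕ) = mateI t A (y : ℕ) := congrArg Fin.val he
          rw [← hv] at hmmy
          exact hmmy.symm
        rw [if_neg h, if_neg hne]
    rw [Matrix.mul_apply]
    have hstep : ∑ z : Fin m, (Pm * M) x z * Pm z y
        = ∑ z : Fin m, (Pm * M) x z
            * (if z = (⟨mateI t A (y : ℕ), hy⟩ : Fin m) then 1 else 0) :=
      Finset.sum_congr rfl fun z _ => by rw [hcol z]
    have hstep2 : ∑ z : Fin m, (Pm * M) x z
          * (if z = (⟨mateI t A (y : ℕ), hy⟩ : Fin m) then 1 else 0)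
        = (Pm * M) x ⟨mateI t A (y : ℕ), hy⟩ * 1 :=
      sum_oneR_aux _ 1 fun z => (Pm * M) x z
    rw [hstep, hstep2, mul_one, Matrix.mul_apply]
    have hstep3 : ∑ z : Fin m, Pm x z * M z ⟨mateI t A (y : ℕ), hy⟩
        = ∑ z : Fin m, (if z = (⟨mateI t A (x : ℕ), hx⟩ : Fin m) then 1 else 0)
            * M z ⟨mateI t A (y : ℕ), hy⟩ :=
      Finset.sum_congr rfl fun z _ => by
        rw [pRow x ⟨mateI t A (x : ℕ), hx⟩ rfl z]
    have hstep4 : ∑ z : Fin m, (if z = (⟨mateI t A (x : ℕ), hx⟩ : Fin m) then 1 else 0)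
          * M z ⟨mateI t A (y : ℕ), hy⟩
        = 1 * M ⟨mateI t A (x : ℕ), hx⟩ ⟨mateI t A (y : ℕ), hy⟩ :=
      sum_one_aux _ 1 fun z => M z ⟨mateI t A (y : ℕ), hy⟩
    rw [hstep3, hstep4, one_mul]
  -- matrix-level facts about Θ
  have hmapmul : ∀ M N : Matrix (Fin m) (Fin m) (E ⊗[F] D),
      (M * N).map Θ = M.map Θ * N.map Θ := fun M N => Matrix.map_mul (f := ΘR)
  have hmapone : (1 : Matrix (Fin m) (Fin m) (E ⊗[F] D)).map Θ = 1 :=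
    Matrix.map_one Θ hΘzero hΘone
  have hVΘ : Vm.map Θ = Vm * Pm := by
    calc Vm.map Θ = (Vm * uMat t m A δ') * Vm.map Θ := by rw [hVu, one_mul]
      _ = Vm * (uMat t m A δ' * Vm.map Θ) := mul_assoc _ _ _
      _ = Vm * Pm := by rw [hw]
  have huΘ : (uMat t m A δ').map Θ = Pm * uMat t m A δ' := by
    have h1 : Vm.map Θ * (uMat t m A δ').map Θ = 1 := by
      rw [← hmapmul, hVu, hmapone]
    calc (uMat t m A δ').map Θ = (Pm * Pm) * (uMat t m A δ').map Θ := by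
          rw [hP2, one_mul]
      _ = Pm * (uMat t m A δ' * Vm.map Θ) * (uMat t m A δ').map Θ := by rw [hw]
      _ = Pm * uMat t m A δ' * (Vm.map Θ * (uMat t m A δ').map Θ) := by noncomm_ring
      _ = Pm * uMat t m A δ' := by rw [h1, mul_one]
  set uU : (Matrix (Fin m) (Fin m) (E ⊗[F] D))ˣ := ⟨uMat t m A δ', Vm, hu, hVu⟩
    with huUdef
  refine ⟨Vm, hu, hVu, Pm, by rw [hw]; exact hP2, by rw [hw]; exact hP2, ?_, ?_⟩
  · intro g
    rw [hw]
    constructor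
    · intro hfix
      refine ⟨uU⁻¹ * g * uU, ?_, ?_⟩
      · have hval : (Units.val (uU⁻¹ * g * uU)) = Vm * Units.val g * uMat t m A δ' := by
          rw [Units.val_mul, Units.val_mul]; rfl
        show (Units.val (uU⁻¹ * g * uU)).map Θ = Units.val (uU⁻¹ * g * uU)
        rw [hval, hmapmul, hmapmul, hVΘ, huΘ]
        calc Vm * Pm * (Units.val g).map Θ * (Pm * uMat t m A δ')
            = Vm * (Pm * (Units.val g).map Θ * Pm) * uMat t m A δ' := by noncomm_ring
          _ = Vm * Units.val g * uMat t m A δ' := by rw [hfix]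
      · have hval : (Units.val (uU⁻¹ * g * uU)) = Vm * Units.val g * uMat t m A δ' := by
          rw [Units.val_mul, Units.val_mul]; rfl
        rw [hval]
        calc Units.val g
            = (uMat t m A δ' * Vm) * Units.val g * (uMat t m A δ' * Vm) := by
              rw [hu, one_mul, mul_one]
          _ = uMat t m A δ' * (Vm * Units.val g * uMat t m A δ') * Vm := by noncomm_ring
    · rintro ⟨h, hh, hg⟩
      have hh' : (Units.val h).map Θ = Units.val h := hh
      rw [hg, hmapmul, hmapmul, hVΘ, huΘ, hh']
      calc Pm * (Pm * uMat t m A δ' * Units.val h * (Vm * Pm)) * Pm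
          = (Pm * Pm) * (uMat t m A δ' * Units.val h * Vm) * (Pm * Pm) := by noncomm_ring
        _ = uMat t m A δ' * Units.val h * Vm := by rw [hP2, one_mul, mul_one]
  · intro g _ x y
    obtain ⟨hx, _, _, _, _, _⟩ := mate_main hA hm x.isLt
    obtain ⟨hy, _, _, _, _, _⟩ := mate_main hA hm y.isLt
    refine ⟨hx, hy, ?_⟩
    rw [hw, hPMP ((Units.val g).map Θ) x y hx hy, Matrix.map_apply]
end

section
/- Let t ≥ 2 and let Δ_1,…,Δ_t be a proper ladder of segments satisfying the duality condition Δ_{t+1−k} = (Δ_k)^∨ for all 1 ≤ k ≤ t. Fix 1 ≤ i ≤ t−1 and define Δ'_k = Δ_k for k ∉ {i, i+1}, Δ'_i = Δ_i ∩ Δ_{i+1} and Δ'_{i+1} = Δ_i ∪ Δ_{i+1} (both are segments, Δ'_i being possibly empty). If there exists an involution ε of {1,…,t} such that Δ'_{ε(k)} = (Δ'_k)^∨ for every k, then t is even and i = t/2. -/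
/-- The segment `[a,b] = {a, a+1, …, b}` (empty when `b < a`), as a set of real numbers. -/
def seg (a b : ℝ) : Set ℝ := {x | ∃ n : ℕ, x = a + n ∧ x ≤ b}

lemma mem_seg {a b x : ℝ} : x ∈ seg a b ↔ ∃ n : ℕ, x = a + n ∧ x ≤ b := Iff.rfl

/-- Two nonempty integer-length segments that are equal as sets have equal endpoints. -/
lemma seg_eq_seg {a b c d : ℝ} {m m' : ℕ} (hab : b = a + m) (hcd : d = c + m')
    (h : seg a b = seg c d) : a = c ∧ b = d := by
  have hm : (0:ℝ) ≤ m := Nat.cast_nonneg m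
  have hm' : (0:ℝ) ≤ m' := Nat.cast_nonneg m'
  have ha : a ∈ seg c d := by
    rw [← h]; exact mem_seg.mpr ⟨0, by norm_num, by linarith⟩
  have hc : c ∈ seg a b := by
    rw [h]; exact mem_seg.mpr ⟨0, by norm_num, by linarith⟩
  obtain ⟨n, han, -⟩ := mem_seg.mp ha
  obtain ⟨n', hcn, -⟩ := mem_seg.mp hc
  have hn : (0:ℝ) ≤ n := Nat.cast_nonneg n
  have hn' : (0:ℝ) ≤ n' := Nat.cast_nonneg n'
  have hac : a = c := by linarith
  have hb : b ∈ seg c d := by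
    rw [← h]; exact mem_seg.mpr ⟨m, hab, le_refl b⟩
  have hd : d ∈ seg a b := by
    rw [h]; exact mem_seg.mpr ⟨m', hcd, le_refl d⟩
  obtain ⟨-, -, hbd⟩ := mem_seg.mp hb
  obtain ⟨-, -, hdb⟩ := mem_seg.mp hd
  exact ⟨hac, le_antisymm hbd hdb⟩

/-- The image of an integer-length segment under negation. -/
lemma neg_seg {a b : ℝ} {m : ℕ} (hab : b = a + m) :
    (fun x : ℝ => -x) '' seg a b = seg (-b) (-a) := by
  ext x
  simp only [Set.mem_image, mem_seg]
  constructor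
  · rintro ⟨y, ⟨n, rfl, hy⟩, rfl⟩
    have hn : n ≤ m := by
      have : (n:ℝ) ≤ m := by linarith
      exact_mod_cast this
    refine ⟨m - n, ?_, by linarith [(Nat.cast_nonneg n : (0:ℝ) ≤ n)]⟩
    rw [Nat.cast_sub hn, hab]; ring
  · rintro ⟨n, rfl, hx⟩
    have hn : n ≤ m := by
      have : (n:ℝ) ≤ m := by linarith
      exact_mod_cast this
    refine ⟨-(-b + n), ⟨m - n, ?_, ?_⟩, by ring⟩
    · rw [Nat.cast_sub hn, hab]; ring
    · rw [hab]; linarith [(Nat.cast_nonneg n : (0:ℝ) ≤ n)]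

/-- Union of consecutive ladder segments. -/
lemma seg_union {a b a' b' : ℝ} {d : ℕ} (hd : a - a' = d)
    (h2 : a - 1 ≤ b') (hb : b' ≤ b) : seg a b ∪ seg a' b' = seg a' b := by
  ext x
  simp only [Set.mem_union, mem_seg]
  constructor
  · rintro (⟨n, rfl, hx⟩ | ⟨n, rfl, hx⟩)
    · exact ⟨n + d, by push_cast; linarith, hx⟩
    · exact ⟨n, rfl, by linarith⟩
  · rintro ⟨n, rfl, hx⟩
    by_cases hc : a' + n ≤ b'
    · exact Or.inr ⟨n, rfl, hc⟩
    · push_neg at hc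
      have hdn : d ≤ n := by
        by_contra hcon
        push_neg at hcon
        have h1 : n + 1 ≤ d := hcon
        have h1' : (n:ℝ) + 1 ≤ d := by exact_mod_cast h1
        linarith
      exact Or.inl ⟨n - d, by push_cast [Nat.cast_sub hdn]; linarith, hx⟩

/-- Intersection of consecutive ladder segments. -/
lemma seg_inter {a b a' b' : ℝ} {d : ℕ} (hd : a - a' = d) (hb : b' ≤ b) :
    seg a b ∩ seg a' b' = seg a b' := by
  ext x
  simp only [Set.mem_inter_iff, mem_seg]
  constructor
  · rintro ⟨⟨n, rfl, -⟩, ⟨n', hx', hxb⟩⟩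
    exact ⟨n, rfl, hxb⟩
  · rintro ⟨n, rfl, hx⟩
    exact ⟨⟨n, rfl, by linarith⟩, ⟨n + d, by push_cast; linarith, hx⟩⟩

lemma strict_anti_of_step {t : ℕ} {f : ℕ → ℝ}
    (h : ∀ k, 1 ≤ k → k < t → f (k + 1) ≤ f k - 1) :
    ∀ k k', 1 ≤ k → k < k' → k' ≤ t → f k' < f k := by
  intro k k'
  induction k' with
  | zero => intro _ h2 _; omega
  | succ n ih =>
    intro hk hkk hkt
    rcases Nat.lt_or_ge k n with h1 | h2
    · have hn := ih hk h1 (by omega)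
      have := h n (by omega) (by omega)
      linarith
    · have hkn : k = n := by omega
      subst hkn
      have := h k hk (by omega)
      linarith

/-- Let `Δ_1, …, Δ_t` (`t ≥ 2`) be a proper ladder of segments
(`Δ_k = [a k, b k]`, all left endpoints in a common `ℤ`-coset, and `Δ_{k+1} ≺ Δ_k`, i.e.
`a (k+1) ≤ a k − 1 ≤ b (k+1) ≤ b k − 1`) satisfying the duality condition
`Δ_{t+1−k} = (Δ_k)^∨ = [−b k, −a k]` for all `k`.  Fix `1 ≤ i ≤ t−1` and set `Δ'_k = Δ_k`
for `k ∉ {i, i+1}`, `Δ'_i = Δ_i ∩ Δ_{i+1}`, `Δ'_{i+1} = Δ_i ∪ Δ_{i+1}`.  If there is an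
involution `ε` of `{1,…,t}` with `Δ'_{ε k} = (Δ'_k)^∨` for all `k`, then `t` is even and
`i = t/2`. -/
theorem stmt_12 (t : ℕ) (ht : 2 ≤ t) (i : ℕ) (hi1 : 1 ≤ i) (hi2 : i ≤ t - 1)
    (a b : ℕ → ℝ)
    (hseg : ∀ k, 1 ≤ k → k ≤ t → a k ≤ b k ∧ ∃ m : ℕ, b k = a k + m)
    (hcoset : ∀ k k', 1 ≤ k → k ≤ t → 1 ≤ k' → k' ≤ t → ∃ z : ℤ, a k - a k' = z)
    (hladder : ∀ k, 1 ≤ k → k < t →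
      a (k + 1) ≤ a k - 1 ∧ a k - 1 ≤ b (k + 1) ∧ b (k + 1) ≤ b k - 1)
    (hdual : ∀ k, 1 ≤ k → k ≤ t → a (t + 1 - k) = -(b k) ∧ b (t + 1 - k) = -(a k))
    (Δ' : ℕ → Set ℝ)
    (hΔ' : ∀ k, Δ' k =
      if k = i then seg (a i) (b i) ∩ seg (a (i + 1)) (b (i + 1))
      else if k = i + 1 then seg (a i) (b i) ∪ seg (a (i + 1)) (b (i + 1))
      else seg (a k) (b k))
    (ε : ℕ → ℕ)
    (hεmem : ∀ k, 1 ≤ k → k ≤ t → 1 ≤ ε k ∧ ε k ≤ t)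
    (hεinv : ∀ k, 1 ≤ k → k ≤ t → ε (ε k) = k)
    (hεdual : ∀ k, 1 ≤ k → k ≤ t → Δ' (ε k) = (fun x : ℝ => -x) '' Δ' k) :
    2 ∣ t ∧ 2 * i = t := by
  have hit : i < t := by omega
  have hi1t : i + 1 ≤ t := by omega
  obtain ⟨hab_i, mi, hmi⟩ := hseg i hi1 (by omega)
  obtain ⟨hab_i1, mi1, hmi1⟩ := hseg (i + 1) (by omega) hi1t
  obtain ⟨L1, L2, L3⟩ := hladder i hi1 hit
  -- the integer gap between a i and a (i+1)
  obtain ⟨z, hz⟩ := hcoset i (i + 1) hi1 (by omega) (by omega) hi1t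
  have hz1 : (1:ℝ) ≤ (z:ℝ) := by rw [← hz]; linarith
  have hz0 : 0 ≤ z := by
    have : (1:ℤ) ≤ z := by exact_mod_cast hz1
    omega
  set d : ℕ := z.toNat with hddef
  have hdz : (d:ℝ) = (z:ℝ) := by
    have : ((z.toNat : ℤ) : ℝ) = (z:ℝ) := by
      rw [Int.toNat_of_nonneg hz0]
    exact_mod_cast this
  have hd : a i - a (i + 1) = (d:ℝ) := by rw [hdz]; exact hz
  -- dual indices
  have e1 : t + 1 - (i + 1) = t - i := by omega
  obtain ⟨hd1, hd2⟩ := hdual i hi1 (by omega)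
  obtain ⟨hd3, hd4⟩ := hdual (i + 1) (by omega) hi1t
  rw [e1] at hd3 hd4
  -- the union segment and its negation
  have hU : seg (a i) (b i) ∪ seg (a (i + 1)) (b (i + 1)) = seg (a (i + 1)) (b i) :=
    seg_union hd L2 (by linarith)
  have hD1 : Δ' (i + 1) = seg (a (i + 1)) (b i) := by
    rw [hΔ' (i + 1), if_neg (by omega), if_pos rfl, hU]
  have hlen : b i = a (i + 1) + ((mi + d : ℕ) : ℝ) := by push_cast; linarith
  have hlenR : b (t - i) = a (t + 1 - i) + ((mi + d : ℕ) : ℝ) := by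
    rw [hd4, hd1]; push_cast; linarith
  have hmain : Δ' (ε (i + 1)) = seg (a (t + 1 - i)) (b (t - i)) := by
    rw [hεdual (i + 1) (by omega) hi1t, hD1, neg_seg hlen, ← hd1, ← hd4]
  obtain ⟨hj1, hjt⟩ := hεmem (i + 1) (by omega) hi1t
  -- injectivity of endpoints
  have aanti := strict_anti_of_step (t := t) (f := a) (fun k hk hkt => (hladder k hk hkt).1)
  have banti := strict_anti_of_step (t := t) (f := b) (fun k hk hkt => (hladder k hk hkt).2.2)
  have ainj : ∀ k k', 1 ≤ k → k ≤ t → 1 ≤ k' → k' ≤ t → a k = a k' → k = k' := by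
    intro k k' h1 h2 h3 h4 he
    rcases lt_trichotomy k k' with h | h | h
    · exact absurd he (ne_of_gt (aanti k k' h1 h h4))
    · exact h
    · exact absurd he (ne_of_lt (aanti k' k h3 h h2))
  have binj : ∀ k k', 1 ≤ k → k ≤ t → 1 ≤ k' → k' ≤ t → b k = b k' → k = k' := by
    intro k k' h1 h2 h3 h4 he
    rcases lt_trichotomy k k' with h | h | h
    · exact absurd he (ne_of_gt (banti k k' h1 h h4))
    · exact h
    · exact absurd he (ne_of_lt (banti k' k h3 h h2))
  rcases eq_or_ne (ε (i + 1)) i with hji | hji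
  · -- ε(i+1) = i : impossible
    have hD : Δ' (ε (i + 1)) = seg (a i) (b (i + 1)) := by
      rw [hΔ' (ε (i + 1)), if_pos hji, seg_inter hd (by linarith)]
    rw [hD] at hmain
    -- the right-hand segment is nonempty, so a i ≤ b (i+1)
    have hmem : a (t + 1 - i) ∈ seg (a (t + 1 - i)) (b (t - i)) :=
      mem_seg.mpr ⟨0, by norm_num, by linarith [hlenR, (Nat.cast_nonneg (mi + d) : (0:ℝ) ≤ (mi + d : ℕ))]⟩
    have hmem' : a (t + 1 - i) ∈ seg (a i) (b (i + 1)) := by rw [hmain]; exact hmem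
    obtain ⟨n, hn1, hn2⟩ := mem_seg.mp hmem'
    have hab' : a i ≤ b (i + 1) := by linarith [(Nat.cast_nonneg n : (0:ℝ) ≤ n)]
    have hdm : d ≤ mi1 := by
      have : (d:ℝ) ≤ (mi1:ℝ) := by linarith
      exact_mod_cast this
    have hlenL : b (i + 1) = a i + ((mi1 - d : ℕ) : ℝ) := by
      push_cast [Nat.cast_sub hdm]; linarith
    obtain ⟨e1', e2'⟩ := seg_eq_seg hlenL hlenR hmain
    have hq1 : i = t + 1 - i := ainj i (t + 1 - i) hi1 (by omega) (by omega) (by omega) e1'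
    have hq2 : i + 1 = t - i := binj (i + 1) (t - i) (by omega) hi1t (by omega) (by omega) e2'
    omega
  · rcases eq_or_ne (ε (i + 1)) (i + 1) with hji1 | hji1
    · -- ε(i+1) = i+1 : forces 2i = t
      have hD : Δ' (ε (i + 1)) = seg (a (i + 1)) (b i) := by
        rw [hΔ' (ε (i + 1)), if_neg hji, if_pos hji1, hU]
      rw [hD] at hmain
      obtain ⟨e1', e2'⟩ := seg_eq_seg hlen hlenR hmain
      have hq : i + 1 = t + 1 - i :=
        ainj (i + 1) (t + 1 - i) (by omega) hi1t (by omega) (by omega) e1'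
      constructor
      · exact ⟨i, by omega⟩
      · omega
    · -- ε(i+1) ∉ {i, i+1} : impossible
      have hD : Δ' (ε (i + 1)) = seg (a (ε (i + 1))) (b (ε (i + 1))) := by
        rw [hΔ' (ε (i + 1)), if_neg hji, if_neg hji1]
      rw [hD] at hmain
      obtain ⟨habj, mj, hmj⟩ := hseg (ε (i + 1)) hj1 hjt
      obtain ⟨e1', e2'⟩ := seg_eq_seg hmj hlenR hmain
      have hq1 : ε (i + 1) = t + 1 - i :=
        ainj (ε (i + 1)) (t + 1 - i) hj1 hjt (by omega) (by omega) e1'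
      have hq2 : ε (i + 1) = t - i :=
        binj (ε (i + 1)) (t - i) hj1 hjt (by omega) (by omega) e2'
      omega
end
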